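/- arXiv:1707.07766 — 5 statements merged into one kernel-verified Lean document; each statement's English description precedes it below -/
import Mathlib

section
/- Let m ≥ 1, let x̄ ∈ Q and ȳ ∈ N_Q(x̄), and let K̄ := T_Q(x̄) ∩ {ȳ}^⊥ be the critical cone. Define d²(v) ∈ (−∞,+∞] for v = (v₀,v_r) ∈ ℝ × ℝ^m by: d²(v) = 0 if x̄ ∈ int(Q) ∪ {0} and v ∈ K̄; d²(v) = (‖ȳ‖/‖x̄‖)(‖v_r‖² − v₀²) if x̄ ∈ bd(Q)\{0} and v ∈ K̄; and d²(v) = +∞ if v ∉ K̄. Then the indicator function δ_Q is twice epi-differentiable at x̄ for ȳ with second-order epi-derivative d², i.e.: (a) for every sequence t_k ↓ 0 and every sequence v_k → v one has liminf_{k→∞} Δ_{t_k}²δ_Q(x̄|ȳ)(v_k) ≥ d²(v), and (b) for every sequence t_k ↓ 0 there exists a sequence v_k → v with limsup_{k→∞} Δ_{t_k}²δ_Q(x̄|ȳ)(v_k) ≤ d²(v). -/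
open scoped RealInnerProductSpace Pointwise
open Filter Topology Metric Set Classical

noncomputable section

abbrev Em (m : ℕ) := WithLp 2 (ℝ × EuclideanSpace ℝ (Fin m))

namespace SOC

def mk2 {α β : Type*} (a : α) (b : β) : WithLp 2 (α × β) := (WithLp.equiv 2 (α × β)).symm (a, b)

def Q (m : ℕ) : Set (Em m) := {s | ‖s.ofLp.2‖ ≤ s.ofLp.1}

variable {H : Type*} [NormedAddCommGroup H] [InnerProductSpace ℝ H]

def normalCone (C : Set H) (x : H) : Set H :=
  {y | x ∈ C ∧ ∀ z ∈ C, ⟪y, z - x⟫ ≤ 0}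

def tangentCone (Ω : Set H) (z : H) : Set H :=
  {w | ∃ t : ℕ → ℝ, ∃ wk : ℕ → H, (∀ k, 0 < t k) ∧ Tendsto t atTop (𝓝 0) ∧
    Tendsto wk atTop (𝓝 w) ∧ ∀ k, z + t k • wk k ∈ Ω}

def regularNormalCone (Ω : Set H) (z : H) : Set H :=
  {v | z ∈ Ω ∧ ∀ ε > 0, ∀ᶠ w in 𝓝[Ω \ {z}] z, ⟪v, w - z⟫ ≤ ε * ‖w - z‖}

def limitingNormalCone (Ω : Set H) (z : H) : Set H :=
  {v | ∃ zk : ℕ → H, ∃ vk : ℕ → H, (∀ k, vk k ∈ regularNormalCone Ω (zk k)) ∧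
    Tendsto zk atTop (𝓝 z) ∧ Tendsto vk atTop (𝓝 v)}

variable {n m : ℕ}

/-- The constraint set `Γ = {x | Φ(x) ∈ Q}`. -/
def Gamma (Φ : EuclideanSpace ℝ (Fin n) → Em m) : Set (EuclideanSpace ℝ (Fin n)) :=
  {x | Φ x ∈ Q m}

/-- Metric subregularity constraint qualification with modulus `κ`. -/
def MSCQmod (Φ : EuclideanSpace ℝ (Fin n) → Em m) (xb : EuclideanSpace ℝ (Fin n)) (κ : ℝ) : Prop :=
  ∃ U ∈ 𝓝 xb, ∀ x ∈ U, infDist x (Gamma Φ) ≤ κ * infDist (Φ x) (Q m)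

def MSCQ (Φ : EuclideanSpace ℝ (Fin n) → Em m) (xb : EuclideanSpace ℝ (Fin n)) : Prop :=
  ∃ κ > 0, MSCQmod Φ xb κ

/-- Lagrange multiplier set `Λ(x,x*)`. -/
def Lambda (Φ : EuclideanSpace ℝ (Fin n) → Em m) (x xs : EuclideanSpace ℝ (Fin n)) : Set (Em m) :=
  {lam | lam ∈ normalCone (Q m) (Φ x) ∧ ContinuousLinearMap.adjoint (fderiv ℝ Φ x) lam = xs}

/-- Critical cone `K(x,x*) = T_Γ(x) ∩ {x*}^⊥`. -/
def Kcone (Φ : EuclideanSpace ℝ (Fin n) → Em m) (x xs : EuclideanSpace ℝ (Fin n)) :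
    Set (EuclideanSpace ℝ (Fin n)) :=
  tangentCone (Gamma Φ) x ∩ {v | ⟪xs, v⟫ = 0}

/-- `x ↦ Φ̂(x) = (−Φ₀(x), Φ_r(x))`. -/
def hatFun (Φ : EuclideanSpace ℝ (Fin n) → Em m) (x : EuclideanSpace ℝ (Fin n)) : Em m :=
  mk2 (-(Φ x).ofLp.1) (Φ x).ofLp.2

/-- Hessian of `x ↦ ⟨λ, Φ(x)⟩` at `x`, as a linear map (derivative of the gradient). -/
def hessLam (Φ : EuclideanSpace ℝ (Fin n) → Em m) (x : EuclideanSpace ℝ (Fin n)) (lam : Em m) :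
    EuclideanSpace ℝ (Fin n) →L[ℝ] EuclideanSpace ℝ (Fin n) :=
  fderiv ℝ (fun y => ContinuousLinearMap.adjoint (fderiv ℝ Φ y) lam) x

/-- The curvature term `H(x;λ)`. -/

def Hmap (Φ : EuclideanSpace ℝ (Fin n) → Em m) (x : EuclideanSpace ℝ (Fin n)) (lam : Em m) :
    EuclideanSpace ℝ (Fin n) →L[ℝ] EuclideanSpace ℝ (Fin n) :=
  if Φ x ∈ frontier (Q m) \ {0} then
    (-(lam.ofLp.1 / (Φ x).ofLp.1)) •
      ((ContinuousLinearMap.adjoint (fderiv ℝ (hatFun Φ) x)).comp (fderiv ℝ Φ x))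
  else 0

/-- `∇²⟨λ,Φ⟩(x) + H(x;λ)`. -/
def Gmap (Φ : EuclideanSpace ℝ (Fin n) → Em m) (x : EuclideanSpace ℝ (Fin n)) (lam : Em m) :
    EuclideanSpace ℝ (Fin n) →L[ℝ] EuclideanSpace ℝ (Fin n) :=
  hessLam Φ x lam + Hmap Φ x lam

/-- `Λ(x,x*;v)`: minimizers of `λ ↦ −⟨v, (∇²⟨λ,Φ⟩(x)+H(x;λ))v⟩` over `Λ(x,x*)`. -/
def LambdaV (Φ : EuclideanSpace ℝ (Fin n) → Em m) (x xs v : EuclideanSpace ℝ (Fin n)) :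
    Set (Em m) :=
  {lam ∈ Lambda Φ x xs | ∀ mu ∈ Lambda Φ x xs,
    -⟪v, Gmap Φ x lam v⟫ ≤ -⟪v, Gmap Φ x mu v⟫}

/-- Graph of the limiting normal cone mapping `N_Γ`, inside `ℝ^n × ℝ^n` with the ℓ² norm. -/
def gphNGamma (Φ : EuclideanSpace ℝ (Fin n) → Em m) :
    Set (WithLp 2 (EuclideanSpace ℝ (Fin n) × EuclideanSpace ℝ (Fin n))) :=
  {p | p.ofLp.2 ∈ limitingNormalCone (Gamma Φ) p.ofLp.1}

/-- Second derivative `D²Φ(x)[v,v]`. -/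
def D2 (Φ : EuclideanSpace ℝ (Fin n) → Em m) (x v : EuclideanSpace ℝ (Fin n)) : Em m :=
  fderiv ℝ (fderiv ℝ Φ) x v v

end SOC

namespace SOC

/-- Indicator function of a set, with values in `(-∞, +∞]` (i.e. `EReal`). -/
def indE {m : ℕ} (C : Set (Em m)) (x : Em m) : EReal := if x ∈ C then 0 else ⊤

/-- Second-order difference quotient
`Δ_t² δ_Q(x̄|ȳ)(v) = [δ_Q(x̄ + t v) − δ_Q(x̄) − t⟨ȳ,v⟩] / (t²/2)`
(written as multiplication by `2/t²`, which agrees with division for `t > 0`). -/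
def sodq {m : ℕ} (xb yb : Em m) (t : ℝ) (v : Em m) : EReal :=
  ((2 / t ^ 2 : ℝ) : EReal) *
    (indE (Q m) (xb + t • v) - indE (Q m) xb - ((t * ⟪yb, v⟫ : ℝ) : EReal))

end SOC

/-!
Write `x̂ = (-x₀, x_r)`. At a boundary point `x ≠ 0` of `Q` every normal vector is
`y = (‖y‖ / ‖x‖) • x̂`, and squaring `‖x_r + t w_r‖ ≤ x₀ + t w₀` shows that `x + t w ∈ Q` iff
`x₀ + t w₀ ≥ 0` and `2 ⟪x̂, w⟫ ≤ t (w₀² - ‖w_r‖²)`. On feasible points the quotient equals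
`-2 ⟪y, w⟫ / t`, so this inequality bounds it below by `(‖y‖ / ‖x‖) (‖w_r‖² - w₀²)`; the
recovery sequence shifts `v` along `(1, 0)` by a multiple of `t_k`, chosen to keep `x + t_k v_k`
in `Q` while the quotients converge to that bound. At interior points and at `0` the quotient is
nonnegative because `⟪y, w⟫ ≤ 0` on feasible directions, and the constant sequence recovers `0`. Off the critical cone either
`x + t_k v_k` eventually leaves `Q` (otherwise a subsequence puts `v` in the tangent cone) or
`⟪y, v⟫ < 0` and `-2 ⟪y, v_k⟫ / t_k → +∞`.
-/

namespace SOC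

section Cones

variable {H : Type*} [NormedAddCommGroup H] [InnerProductSpace ℝ H] {C : Set H} {x y v : H}

def criticalCone (C : Set H) (x y : H) : Set H :=
  tangentCone C x ∩ {u | ⟪y, u⟫ = 0}

lemma inner_nonpos_of_mem_normalCone (hy : y ∈ normalCone C x) {t : ℝ} (ht : 0 < t) {w : H}
    (hw : x + t • w ∈ C) : ⟪y, w⟫ ≤ 0 := by
  have h := hy.2 _ hw
  rw [add_sub_cancel_left, inner_smul_right] at h
  exact nonpos_of_mul_nonpos_right h ht

lemma inner_nonpos_of_mem_tangentCone (hy : y ∈ normalCone C x) (hv : v ∈ tangentCone C x) :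
    ⟪y, v⟫ ≤ 0 := by
  obtain ⟨t, w, ht, -, hw, hmem⟩ := hv
  exact le_of_tendsto' (tendsto_const_nhds.inner hw) fun k =>
    inner_nonpos_of_mem_normalCone hy (ht k) (hmem k)

lemma mem_tangentCone_of_frequently {t : ℕ → ℝ} {vk : ℕ → H} (ht : ∀ k, 0 < t k)
    (ht0 : Tendsto t atTop (𝓝 0)) (hvk : Tendsto vk atTop (𝓝 v))
    (h : ∃ᶠ k in atTop, x + t k • vk k ∈ C) : v ∈ tangentCone C x := by
  obtain ⟨φ, hφ, hmem⟩ := extraction_of_frequently_atTop h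
  exact ⟨t ∘ φ, vk ∘ φ, fun k => ht _, ht0.comp hφ.tendsto_atTop,
    hvk.comp hφ.tendsto_atTop, hmem⟩

end Cones

section SecondOrderCone

variable {m : ℕ} {s x y v w : Em m}

def reflect (x : Em m) : Em m := mk2 (-x.ofLp.1) x.ofLp.2

lemma ofLp_mk2 (a : ℝ) (b : EuclideanSpace ℝ (Fin m)) : (mk2 a b : Em m).ofLp = (a, b) := rfl

lemma inner_eq_fst_mul_add_inner_snd (y w : Em m) :
    ⟪y, w⟫ = y.ofLp.1 * w.ofLp.1 + ⟪y.ofLp.2, w.ofLp.2⟫ := by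
  simp [WithLp.prod_inner_apply, mul_comm]

lemma norm_reflect (x : Em m) : ‖reflect x‖ = ‖x‖ := by
  have h : ‖reflect x‖ ^ 2 = ‖x‖ ^ 2 := by simp [WithLp.prod_norm_sq_eq_of_L2, reflect, mk2]
  exact (sq_eq_sq₀ (norm_nonneg _) (norm_nonneg _)).1 h

lemma inner_reflect (x w : Em m) :
    ⟪reflect x, w⟫ = ⟪x.ofLp.2, w.ofLp.2⟫ - x.ofLp.1 * w.ofLp.1 := by
  simp [reflect, mk2]
  ring

lemma mem_Q_iff_sq : s ∈ Q m ↔ 0 ≤ s.ofLp.1 ∧ ‖s.ofLp.2‖ ^ 2 ≤ s.ofLp.1 ^ 2 := by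
  refine ⟨fun h => ⟨(norm_nonneg _).trans h, pow_le_pow_left₀ (norm_nonneg _) h 2⟩,
    fun ⟨h0, h⟩ => (pow_le_pow_iff_left₀ (norm_nonneg _) h0 two_ne_zero).1 h⟩

lemma isClosed_Q : IsClosed (Q m) :=
  isClosed_le (f := fun s : Em m => ‖s.ofLp.2‖) (by fun_prop) (by fun_prop)

lemma mem_interior_Q_of_lt (h : ‖s.ofLp.2‖ < s.ofLp.1) : s ∈ interior (Q m) := by
  have hopen : IsOpen {s : Em m | ‖s.ofLp.2‖ < s.ofLp.1} := isOpen_lt (by fun_prop) (by fun_prop)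
  have hsub : {s : Em m | ‖s.ofLp.2‖ < s.ofLp.1} ⊆ Q m := fun _ hz => le_of_lt (α := ℝ) hz
  exact hopen.subset_interior_iff.2 hsub h

lemma smul_mem_Q {t : ℝ} (ht : 0 ≤ t) (hs : s ∈ Q m) : t • s ∈ Q m := by
  change ‖t • s.ofLp.2‖ ≤ t * s.ofLp.1
  rw [norm_smul, Real.norm_of_nonneg ht]
  exact mul_le_mul_of_nonneg_left hs ht

lemma add_mem_Q (hs : s ∈ Q m) (hw : w ∈ Q m) : s + w ∈ Q m :=
  (norm_add_le _ _).trans (add_le_add hs hw)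

lemma tangentCone_Q_zero_subset : tangentCone (Q m) 0 ⊆ Q m := by
  rintro v ⟨t, w, ht, -, hw, hmem⟩
  refine isClosed_Q.mem_of_tendsto hw (.of_forall fun k => ?_)
  have h := smul_mem_Q (inv_nonneg.2 (ht k).le) (hmem k)
  rwa [zero_add, smul_smul, inv_mul_cancel₀ (ht k).ne', one_smul] at h

lemma fst_pos_of_mem_Q_of_ne_zero (hs : s ∈ Q m) (h0 : s ≠ 0) : 0 < s.ofLp.1 := by
  refine (norm_nonneg _).trans hs |>.lt_of_ne fun h => h0 ?_
  have hr : s.ofLp.2 = 0 := norm_le_zero_iff.1 (h ▸ hs)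
  exact WithLp.ofLp_injective 2 (Prod.ext h.symm hr)

lemma norm_snd_eq_fst_of_notMem_interior (hs : s ∈ Q m) (h : s ∉ interior (Q m)) :
    ‖s.ofLp.2‖ = s.ofLp.1 :=
  hs.antisymm (not_lt.1 fun hlt => h (mem_interior_Q_of_lt hlt))

lemma neg_mem_Q_of_forall_inner_nonpos (h : ∀ z ∈ Q m, ⟪y, z⟫ ≤ 0) : -y ∈ Q m := by
  have h1 : y.ofLp.1 ≤ 0 := by
    simpa [inner_eq_fst_mul_add_inner_snd, mk2] using h (mk2 1 0) (by simp [Q, mk2])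
  have h2 : ‖y.ofLp.2‖ * y.ofLp.1 + ‖y.ofLp.2‖ ^ 2 ≤ 0 := by
    simpa [inner_eq_fst_mul_add_inner_snd, real_inner_self_eq_norm_sq, mk2] using
      h (mk2 ‖y.ofLp.2‖ y.ofLp.2) (by simp [Q, mk2])
  change ‖-y.ofLp.2‖ ≤ -y.ofLp.1
  rw [norm_neg]
  nlinarith [norm_nonneg y.ofLp.2]

lemma eq_smul_reflect_of_neg_mem_Q (hx : ‖x.ofLp.2‖ = x.ofLp.1) (hx0 : 0 < x.ofLp.1)
    (hy : -y ∈ Q m) (hxy : ⟪y, x⟫ = 0) : y = (-y.ofLp.1 / x.ofLp.1) • reflect x := by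
  set ρ := -y.ofLp.1 / x.ofLp.1 with hρ
  have hy' : ‖y.ofLp.2‖ ≤ -y.ofLp.1 := by
    have h : ‖-y.ofLp.2‖ ≤ -y.ofLp.1 := hy
    rwa [norm_neg] at h
  have hxy' : y.ofLp.1 * x.ofLp.1 + ⟪y.ofLp.2, x.ofLp.2⟫ = 0 := by
    rwa [inner_eq_fst_mul_add_inner_snd] at hxy
  have hρx : ρ * x.ofLp.1 = -y.ofLp.1 := by rw [hρ]; field_simp
  have hsnd : ‖y.ofLp.2 - ρ • x.ofLp.2‖ ^ 2 ≤ 0 := by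
    rw [norm_sub_sq_real, inner_smul_right, norm_smul, Real.norm_eq_abs, mul_pow, sq_abs, hx]
    have h1 : ρ * ⟪y.ofLp.2, x.ofLp.2⟫ = y.ofLp.1 ^ 2 := by
      linear_combination ρ * hxy' - y.ofLp.1 * hρx
    have h2 : ρ ^ 2 * x.ofLp.1 ^ 2 = y.ofLp.1 ^ 2 := by
      linear_combination (ρ * x.ofLp.1 - y.ofLp.1) * hρx
    nlinarith [norm_nonneg y.ofLp.2]
  have hsnd' : y.ofLp.2 = ρ • x.ofLp.2 :=
    sub_eq_zero.1 (norm_eq_zero.1 (pow_eq_zero_iff two_ne_zero |>.1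
      (le_antisymm hsnd (by positivity))))
  refine WithLp.ofLp_injective 2 (Prod.ext ?_ hsnd')
  change y.ofLp.1 = ρ * -x.ofLp.1
  linarith

lemma eq_smul_reflect_of_mem_normalCone (hx : ‖x.ofLp.2‖ = x.ofLp.1) (hx0 : 0 < x.ofLp.1)
    (hy : y ∈ normalCone (Q m) x) : y = (‖y‖ / ‖x‖) • reflect x := by
  have hpolar : ∀ z ∈ Q m, ⟪y, z⟫ ≤ 0 := fun z hz =>
    inner_nonpos_of_mem_normalCone hy one_pos (by simpa using add_mem_Q hy.1 hz)
  have hxy : ⟪y, x⟫ = 0 := by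
    refine le_antisymm (hpolar x hy.1) ?_
    have h := hy.2 0 (by simpa using smul_mem_Q le_rfl hy.1)
    rwa [zero_sub, inner_neg_right, neg_nonpos] at h
  have hneg := neg_mem_Q_of_forall_inner_nonpos hpolar
  have hρ : 0 ≤ -y.ofLp.1 / x.ofLp.1 := div_nonneg ((norm_nonneg _).trans hneg) hx0.le
  have hy_eq := eq_smul_reflect_of_neg_mem_Q hx hx0 hneg hxy
  have hxn : ‖x‖ ≠ 0 := norm_ne_zero_iff.2 fun h => hx0.ne' (by simp [h])
  suffices ‖y‖ / ‖x‖ = -y.ofLp.1 / x.ofLp.1 by rwa [this]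
  conv_lhs => rw [hy_eq, norm_smul, norm_reflect, Real.norm_of_nonneg hρ,
    mul_div_cancel_right₀ _ hxn]

lemma add_smul_mem_Q_iff (hx : ‖x.ofLp.2‖ = x.ofLp.1) {t : ℝ} (ht : 0 < t) :
    x + t • w ∈ Q m ↔
      0 ≤ x.ofLp.1 + t * w.ofLp.1 ∧ 2 * ⟪reflect x, w⟫ ≤ t * (w.ofLp.1 ^ 2 - ‖w.ofLp.2‖ ^ 2) := by
  have hexp : ‖x.ofLp.2 + t • w.ofLp.2‖ ^ 2 =
      x.ofLp.1 ^ 2 + 2 * t * ⟪x.ofLp.2, w.ofLp.2⟫ + t ^ 2 * ‖w.ofLp.2‖ ^ 2 := by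
    rw [norm_add_sq_real, inner_smul_right, norm_smul, Real.norm_eq_abs, mul_pow, sq_abs, hx]
    ring
  rw [mem_Q_iff_sq, inner_reflect]
  simp only [WithLp.ofLp_add, WithLp.ofLp_smul, Prod.fst_add, Prod.snd_add, Prod.smul_fst,
    Prod.smul_snd, smul_eq_mul, hexp]
  refine and_congr_right fun _ => ?_
  constructor <;> intro h <;> nlinarith

lemma inner_reflect_nonpos_of_mem_tangentCone (hx : ‖x.ofLp.2‖ = x.ofLp.1)
    (hv : v ∈ tangentCone (Q m) x) : ⟪reflect x, v⟫ ≤ 0 := by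
  obtain ⟨t, w, ht, ht0, hw, hmem⟩ := hv
  have hq : Tendsto (fun k => (w k).ofLp.1 ^ 2 - ‖(w k).ofLp.2‖ ^ 2) atTop
      (𝓝 (v.ofLp.1 ^ 2 - ‖v.ofLp.2‖ ^ 2)) :=
    ((by fun_prop : Continuous fun w : Em m => w.ofLp.1 ^ 2 - ‖w.ofLp.2‖ ^ 2).tendsto v).comp hw
  have h := le_of_tendsto_of_tendsto' ((tendsto_const_nhds.inner hw).const_mul 2) (ht0.mul hq)
    fun k => ((add_smul_mem_Q_iff hx (ht k)).1 (hmem k)).2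
  rw [zero_mul] at h
  linarith

lemma add_smul_add_smul_mem_Q (hx : ‖x.ofLp.2‖ = x.ofLp.1) (hv : ⟪reflect x, v⟫ ≤ 0)
    {t c : ℝ} (ht : 0 < t)
    (hc : ‖v.ofLp.2‖ ^ 2 - v.ofLp.1 ^ 2 ≤ 2 * c * (x.ofLp.1 + t * v.ofLp.1))
    (hpos : 0 ≤ x.ofLp.1 + t * (v.ofLp.1 + t * c)) :
    x + t • (v + (t * c) • mk2 1 0) ∈ Q m := by
  have hr : ⟪reflect x, v + (t * c) • mk2 1 0⟫ = ⟪reflect x, v⟫ - t * c * x.ofLp.1 := by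
    rw [inner_add_right, inner_smul_right, inner_reflect x (mk2 1 0)]
    simp only [ofLp_mk2, inner_zero_right]
    ring
  rw [add_smul_mem_Q_iff hx ht, hr]
  simp only [WithLp.ofLp_add, WithLp.ofLp_smul, ofLp_mk2, Prod.fst_add, Prod.snd_add,
    Prod.smul_fst, Prod.smul_snd, smul_eq_mul, smul_zero, add_zero, mul_one]
  refine ⟨hpos, ?_⟩
  nlinarith [mul_le_mul_of_nonneg_left hc ht.le, sq_nonneg (t * c), mul_pos ht ht]

end SecondOrderCone

section DifferenceQuotient

variable {m : ℕ} {x y w : Em m} {t : ℝ}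

lemma sodq_of_mem (ht : 0 < t) (hx : x ∈ Q m) (h : x + t • w ∈ Q m) :
    sodq x y t w = ((-2 / t * ⟪y, w⟫ : ℝ) : EReal) := by
  rw [sodq, indE, indE, if_pos hx, if_pos h, ← EReal.coe_zero, ← EReal.coe_sub, ← EReal.coe_sub,
    ← EReal.coe_mul, EReal.coe_eq_coe_iff]
  field_simp
  ring

lemma sodq_of_notMem (ht : 0 < t) (hx : x ∈ Q m) (h : x + t • w ∉ Q m) : sodq x y t w = ⊤ := by
  rw [sodq, indE, indE, if_pos hx, if_neg h, sub_zero, EReal.top_sub_coe]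
  exact EReal.coe_mul_top_of_pos (by positivity)

lemma coe_le_sodq_of_imp (ht : 0 < t) (hx : x ∈ Q m) {c : ℝ}
    (h : x + t • w ∈ Q m → c ≤ -2 / t * ⟪y, w⟫) : (c : EReal) ≤ sodq x y t w := by
  by_cases hw : x + t • w ∈ Q m
  · rw [sodq_of_mem ht hx hw]
    exact EReal.coe_le_coe_iff.2 (h hw)
  · rw [sodq_of_notMem ht hx hw]
    exact le_top

lemma sodq_nonneg (ht : 0 < t) (hy : y ∈ normalCone (Q m) x) : 0 ≤ sodq x y t w :=
  coe_le_sodq_of_imp ht hy.1 fun hw =>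
    mul_nonneg_of_nonpos_of_nonpos (div_nonpos_of_nonpos_of_nonneg (by norm_num) ht.le)
      (inner_nonpos_of_mem_normalCone hy ht hw)

lemma le_sodq_of_frontier (hx : ‖x.ofLp.2‖ = x.ofLp.1) (hx0 : 0 < x.ofLp.1)
    (hy : y ∈ normalCone (Q m) x) (ht : 0 < t) :
    ((‖y‖ / ‖x‖ * (‖w.ofLp.2‖ ^ 2 - w.ofLp.1 ^ 2) : ℝ) : EReal) ≤ sodq x y t w := by
  refine coe_le_sodq_of_imp ht hy.1 fun hw => ?_
  have hq := ((add_smul_mem_Q_iff hx ht).1 hw).2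
  have hρ : 0 ≤ ‖y‖ / ‖x‖ := by positivity
  have hyρ := eq_smul_reflect_of_mem_normalCone hx hx0 hy
  generalize ‖y‖ / ‖x‖ = ρ at hρ hyρ ⊢
  rw [hyρ, real_inner_smul_left, div_mul_eq_mul_div, le_div_iff₀ ht]
  nlinarith [mul_le_mul_of_nonneg_left hq hρ]

end DifferenceQuotient

section EpiDerivative

variable {m : ℕ} {x y v : Em m} {t : ℕ → ℝ} {vk : ℕ → Em m}

lemma tendsto_sodq_top_of_notMem_criticalCone (hy : y ∈ normalCone (Q m) x)
    (hv : v ∉ criticalCone (Q m) x y) (ht : ∀ k, 0 < t k) (ht0 : Tendsto t atTop (𝓝 0))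
    (hvk : Tendsto vk atTop (𝓝 v)) :
    Tendsto (fun k => sodq x y (t k) (vk k)) atTop (𝓝 ⊤) := by
  by_cases hT : v ∈ tangentCone (Q m) x
  · have hneg : ⟪y, v⟫ < 0 :=
      (inner_nonpos_of_mem_tangentCone hy hT).lt_of_ne fun h => hv ⟨hT, h⟩
    have hinv : Tendsto (fun k => (t k)⁻¹) atTop atTop :=
      tendsto_inv_nhdsGT_zero.comp (tendsto_nhdsWithin_iff.2 ⟨ht0, .of_forall ht⟩)
    have hlin : Tendsto (fun k => -2 * ⟪y, vk k⟫) atTop (𝓝 (-2 * ⟪y, v⟫)) :=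
      (tendsto_const_nhds.inner hvk).const_mul _
    refine tendsto_nhds_top_mono
      (EReal.tendsto_coe_nhds_top_iff.2 (hinv.atTop_mul_pos (by linarith) hlin))
      (.of_forall fun k => coe_le_sodq_of_imp (ht k) hy.1 fun _ => le_of_eq (by ring))
  · have hout : ∀ᶠ k in atTop, x + t k • vk k ∉ Q m :=
      not_frequently.1 fun h => hT (mem_tangentCone_of_frequently ht ht0 hvk h)
    exact tendsto_const_nhds.congr' (hout.mono fun k hk => (sodq_of_notMem (ht k) hy.1 hk).symm)

lemma eventually_add_smul_mem_Q (hx : x ∈ interior (Q m) ∪ {0}) (hv : v ∈ tangentCone (Q m) x)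
    (ht : ∀ k, 0 < t k) (ht0 : Tendsto t atTop (𝓝 0)) : ∀ᶠ k in atTop, x + t k • v ∈ Q m := by
  rcases hx with hx | rfl
  · have hlim : Tendsto (fun k => x + t k • v) atTop (𝓝 x) := by
      simpa using tendsto_const_nhds.add (ht0.smul_const v)
    exact hlim.eventually_mem (mem_interior_iff_mem_nhds.1 hx)
  · exact .of_forall fun k => by
      simpa using smul_mem_Q (ht k).le (tangentCone_Q_zero_subset hv)

lemma exists_tendsto_sodq_of_frontier (hx : ‖x.ofLp.2‖ = x.ofLp.1) (hx0 : 0 < x.ofLp.1)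
    (hy : y ∈ normalCone (Q m) x) (hv : v ∈ criticalCone (Q m) x y) (ht : ∀ k, 0 < t k)
    (ht0 : Tendsto t atTop (𝓝 0)) :
    ∃ vk : ℕ → Em m, Tendsto vk atTop (𝓝 v) ∧ Tendsto (fun k => sodq x y (t k) (vk k)) atTop
      (𝓝 ((‖y‖ / ‖x‖ * (‖v.ofLp.2‖ ^ 2 - v.ofLp.1 ^ 2) : ℝ) : EReal)) := by
  set ρ := ‖y‖ / ‖x‖
  set q := ‖v.ofLp.2‖ ^ 2 - v.ofLp.1 ^ 2
  have hy0 : y.ofLp.1 = ρ * -x.ofLp.1 :=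
    congrArg (fun z : Em m => z.ofLp.1) (eq_smul_reflect_of_mem_normalCone hx hx0 hy)
  have hden : Tendsto (fun k => x.ofLp.1 + t k * v.ofLp.1) atTop (𝓝 x.ofLp.1) := by
    simpa using (ht0.mul_const v.ofLp.1).const_add x.ofLp.1
  -- `c k` makes the hypothesis `hc` of `add_smul_add_smul_mem_Q` an equality
  set c : ℕ → ℝ := fun k => q / (2 * (x.ofLp.1 + t k * v.ofLp.1))
  have hc : Tendsto c atTop (𝓝 (q / (2 * x.ofLp.1))) :=
    tendsto_const_nhds.div (hden.const_mul 2) (by positivity)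
  have hpos : ∀ᶠ k in atTop, 0 ≤ x.ofLp.1 + t k * (v.ofLp.1 + t k * c k) := by
    have h : Tendsto (fun k => x.ofLp.1 + t k * (v.ofLp.1 + t k * c k)) atTop (𝓝 x.ofLp.1) := by
      simpa using (ht0.mul (tendsto_const_nhds.add (ht0.mul hc))).const_add x.ofLp.1
    exact h.eventually (eventually_ge_nhds hx0)
  refine ⟨fun k => v + (t k * c k) • mk2 1 0, ?_, ?_⟩
  · simpa using tendsto_const_nhds.add ((ht0.mul hc).smul_const (mk2 1 0 : Em m))
  have hlim : Tendsto (fun k => ((2 * ρ * x.ofLp.1 * c k : ℝ) : EReal)) atTop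
      (𝓝 ((ρ * q : ℝ) : EReal)) := by
    convert EReal.tendsto_coe.2 (hc.const_mul (2 * ρ * x.ofLp.1)) using 3
    field_simp
  refine hlim.congr' ?_
  filter_upwards [hden.eventually (eventually_gt_nhds hx0), hpos] with k hk hk'
  have hcq : q ≤ 2 * c k * (x.ofLp.1 + t k * v.ofLp.1) := le_of_eq (by simp only [c]; field_simp)
  have hmem := add_smul_add_smul_mem_Q hx (inner_reflect_nonpos_of_mem_tangentCone hx hv.1)
    (ht k) hcq hk'
  rw [sodq_of_mem (ht k) hy.1 hmem, inner_add_right, hv.2, inner_smul_right,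
    inner_eq_fst_mul_add_inner_snd y (mk2 1 0)]
  simp only [ofLp_mk2, inner_zero_right, mul_one, add_zero, zero_add, hy0]
  have htk := (ht k).ne'
  congr 1
  field_simp

def secondEpiDeriv (x y v : Em m) : EReal :=
  if v ∈ criticalCone (Q m) x y then
    if x ∈ interior (Q m) ∪ {0} then 0
    else ((‖y‖ / ‖x‖ * (‖v.ofLp.2‖ ^ 2 - v.ofLp.1 ^ 2) : ℝ) : EReal)
  else ⊤

theorem secondEpiDeriv_le_liminf_sodq (hy : y ∈ normalCone (Q m) x) (ht : ∀ k, 0 < t k)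
    (ht0 : Tendsto t atTop (𝓝 0)) (hvk : Tendsto vk atTop (𝓝 v)) :
    secondEpiDeriv x y v ≤ liminf (fun k => sodq x y (t k) (vk k)) atTop := by
  by_cases hv : v ∈ criticalCone (Q m) x y
  swap
  · rw [(tendsto_sodq_top_of_notMem_criticalCone hy hv ht ht0 hvk).liminf_eq]
    exact le_top
  by_cases hx : x ∈ interior (Q m) ∪ {0}
  · rw [secondEpiDeriv, if_pos hv, if_pos hx]
    exact le_liminf_of_le (by isBoundedDefault) (.of_forall fun k => sodq_nonneg (ht k) hy)
  · rw [secondEpiDeriv, if_pos hv, if_neg hx]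
    obtain ⟨hint, hx0⟩ := not_or.1 hx
    have hfr := norm_snd_eq_fst_of_notMem_interior hy.1 hint
    have hlim : Tendsto (fun k => ((‖y‖ / ‖x‖ * (‖(vk k).ofLp.2‖ ^ 2 - (vk k).ofLp.1 ^ 2) : ℝ) :
        EReal)) atTop (𝓝 ((‖y‖ / ‖x‖ * (‖v.ofLp.2‖ ^ 2 - v.ofLp.1 ^ 2) : ℝ) : EReal)) :=
      EReal.tendsto_coe.2 (((by fun_prop : Continuous fun w : Em m =>
        ‖y‖ / ‖x‖ * (‖w.ofLp.2‖ ^ 2 - w.ofLp.1 ^ 2)).tendsto v).comp hvk)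
    rw [← hlim.liminf_eq]
    exact liminf_le_liminf (.of_forall fun k =>
      le_sodq_of_frontier hfr (fst_pos_of_mem_Q_of_ne_zero hy.1 hx0) hy (ht k))

theorem exists_limsup_sodq_le_secondEpiDeriv (hy : y ∈ normalCone (Q m) x) (ht : ∀ k, 0 < t k)
    (ht0 : Tendsto t atTop (𝓝 0)) :
    ∃ vk : ℕ → Em m, Tendsto vk atTop (𝓝 v) ∧
      limsup (fun k => sodq x y (t k) (vk k)) atTop ≤ secondEpiDeriv x y v := by
  by_cases hv : v ∈ criticalCone (Q m) x y
  swap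
  · exact ⟨fun _ => v, tendsto_const_nhds, by simp [secondEpiDeriv, hv]⟩
  suffices ∃ vk : ℕ → Em m, Tendsto vk atTop (𝓝 v) ∧
      Tendsto (fun k => sodq x y (t k) (vk k)) atTop (𝓝 (secondEpiDeriv x y v)) by
    obtain ⟨vk, hvk, hlim⟩ := this
    exact ⟨vk, hvk, hlim.limsup_eq.le⟩
  by_cases hx : x ∈ interior (Q m) ∪ {0}
  · rw [secondEpiDeriv, if_pos hv, if_pos hx]
    refine ⟨fun _ => v, tendsto_const_nhds, tendsto_const_nhds.congr' ?_⟩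
    filter_upwards [eventually_add_smul_mem_Q hx hv.1 ht ht0] with k hk
    rw [sodq_of_mem (ht k) hy.1 hk, hv.2, mul_zero, EReal.coe_zero]
  · rw [secondEpiDeriv, if_pos hv, if_neg hx]
    obtain ⟨hint, hx0⟩ := not_or.1 hx
    exact exists_tendsto_sodq_of_frontier (norm_snd_eq_fst_of_notMem_interior hy.1 hint)
      (fst_pos_of_mem_Q_of_ne_zero hy.1 hx0) hy hv ht ht0

end EpiDerivative

end SOC

open SOC in
theorem twice_epi_differentiability_of_indicator_of_secondOrderCone_general
    {m : ℕ} (xb yb : Em m)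
    (hyb : yb ∈ normalCone (Q m) xb)
    (Kbar : Set (Em m)) (hK : Kbar = tangentCone (Q m) xb ∩ {u | ⟪yb, u⟫ = 0})
    (d : Em m → EReal)
    (hd : ∀ v : Em m, d v =
      if v ∈ Kbar then
        (if xb ∈ interior (Q m) ∪ {(0 : Em m)} then (0 : EReal)
         else (((‖yb‖ / ‖xb‖) * (‖v.ofLp.2‖ ^ 2 - v.ofLp.1 ^ 2) : ℝ) : EReal))
      else (⊤ : EReal)) :
    (∀ v : Em m, ∀ t : ℕ → ℝ, (∀ k, 0 < t k) → Filter.Tendsto t Filter.atTop (nhds 0) →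
      ∀ vk : ℕ → Em m, Filter.Tendsto vk Filter.atTop (nhds v) →
        d v ≤ Filter.liminf (fun k => sodq xb yb (t k) (vk k)) Filter.atTop) ∧
    (∀ v : Em m, ∀ t : ℕ → ℝ, (∀ k, 0 < t k) → Filter.Tendsto t Filter.atTop (nhds 0) →
      ∃ vk : ℕ → Em m, Filter.Tendsto vk Filter.atTop (nhds v) ∧
        Filter.limsup (fun k => sodq xb yb (t k) (vk k)) Filter.atTop ≤ d v) := by
  obtain rfl : d = secondEpiDeriv xb yb := funext fun v => by rw [hd, hK]; rfl
  exact ⟨fun v t ht ht0 vk hvk => secondEpiDeriv_le_liminf_sodq hyb ht ht0 hvk,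
    fun v t ht ht0 => exists_limsup_sodq_le_secondEpiDeriv hyb ht ht0⟩

open SOC in
/-- Theorem 3.1: twice epi-differentiability of the indicator function of the
second-order cone, with the explicit second-order epi-derivative `d`. -/
theorem twice_epi_differentiability_of_indicator_of_secondOrderCone
    {m : ℕ} (hm : 1 ≤ m) (xb yb : Em m)
    (hxb : xb ∈ Q m) (hyb : yb ∈ normalCone (Q m) xb)
    (Kbar : Set (Em m)) (hK : Kbar = tangentCone (Q m) xb ∩ {u | ⟪yb, u⟫ = 0})
    (d : Em m → EReal)
    (hd : ∀ v : Em m, d v =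
      if v ∈ Kbar then
        (if xb ∈ interior (Q m) ∪ {(0 : Em m)} then (0 : EReal)
         else (((‖yb‖ / ‖xb‖) * (‖v.ofLp.2‖ ^ 2 - v.ofLp.1 ^ 2) : ℝ) : EReal))
      else (⊤ : EReal)) :
    (∀ v : Em m, ∀ t : ℕ → ℝ, (∀ k, 0 < t k) → Filter.Tendsto t Filter.atTop (nhds 0) →
      ∀ vk : ℕ → Em m, Filter.Tendsto vk Filter.atTop (nhds v) →
        d v ≤ Filter.liminf (fun k => sodq xb yb (t k) (vk k)) Filter.atTop) ∧
    (∀ v : Em m, ∀ t : ℕ → ℝ, (∀ k, 0 < t k) → Filter.Tendsto t Filter.atTop (nhds 0) →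
      ∃ vk : ℕ → Em m, Filter.Tendsto vk Filter.atTop (nhds v) ∧
        Filter.limsup (fun k => sodq xb yb (t k) (vk k)) Filter.atTop ≤ d v) :=
  twice_epi_differentiability_of_indicator_of_secondOrderCone_general xb yb hyb Kbar hK d hd
end
end

section
/- Let Ω ⊆ ℝ^n be a nonempty closed convex set whose Euclidean projection Π_Ω is directionally differentiable at every point in every direction, i.e., Π'_Ω(x;h) := lim_{t↓0} (Π_Ω(x+th) − Π_Ω(x))/t exists for all x,h ∈ ℝ^n. Fix x̄ ∈ Ω. Then the projection derivation condition (PDC) holds at x̄ — meaning Π'_Ω(x̄+y;h) = Π_{K(x̄,y)}(h) for all y ∈ N_Ω(x̄) and all h ∈ ℝ^n, where K(x̄,y) := T_Ω(x̄) ∩ {y}^⊥ — if and only if (DN_Ω)(x̄,ȳ)(v) = N_{K(x̄,ȳ)}(v) for all ȳ ∈ N_Ω(x̄) and all v ∈ ℝ^n. -/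
open scoped RealInnerProductSpace Pointwise
open Filter Topology Metric Set Classical

noncomputable section

namespace SOC

variable {H : Type*} [NormedAddCommGroup H] [InnerProductSpace ℝ H]

/-- `π` is the (Euclidean) metric projection onto `C`. -/
def IsProjOn (C : Set H) (π : H → H) : Prop :=
  ∀ x, π x ∈ C ∧ ∀ z ∈ C, ‖x - π x‖ ≤ ‖x - z‖

/-- Graph of the normal cone mapping `N_Ω`. -/
def gphN (Ω : Set H) : Set (WithLp 2 (H × H)) :=
  {p | p.ofLp.2 ∈ normalCone Ω p.ofLp.1}

end SOC

/-!
For convex `Ω`, `y ∈ N_Ω(x)` iff `Π_Ω(x + y) = x`, so `p ↦ (Π_Ω p, p - Π_Ω p)` parametrizes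
`gph N_Ω`. A tangent direction `(v, w)` to `gph N_Ω` at `(x̄, ȳ)` is thus a limit of pairs
`(v_k, w_k)` in which `v_k` is a difference quotient of `Π_Ω` at `x̄ + ȳ` in direction
`v_k + w_k`. Since `Π_Ω` is nonexpansive, if `Π_Ω` has directional derivative `L` at `x̄ + ȳ` in
direction `v + w`, then `(v, w)` is tangent iff `v = L`. PDC says `L = Π_K(v + w)`, and
`Π_K(v + w) = v` iff `w ∈ N_K(v)`; directional differentiability supplies `L` for the converse.
-/

namespace SOC

theorem exists_isProjOn {E : Type*} [NormedAddCommGroup E] [ProperSpace E] {C : Set E}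
    (hC : IsClosed C) (hne : C.Nonempty) : ∃ π : E → E, IsProjOn C π := by
  choose π hπC hπ using hC.exists_infDist_eq_dist hne
  refine ⟨π, fun x => ⟨hπC x, fun z hz => ?_⟩⟩
  rw [← dist_eq_norm, ← dist_eq_norm, ← hπ x]
  exact infDist_le_dist_of_mem hz

variable {H : Type*} [NormedAddCommGroup H] [InnerProductSpace ℝ H]

section Projection

variable {C : Set H} {π : H → H}

theorem IsProjOn.inner_sub_le_zero (hC : Convex ℝ C) (hπ : IsProjOn C π) (x : H) {z : H}
    (hz : z ∈ C) : ⟪x - π x, z - π x⟫ ≤ 0 := by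
  have : Nonempty C := ⟨⟨z, hz⟩⟩
  refine (norm_eq_iInf_iff_real_inner_le_zero hC (hπ x).1).1 ?_ z hz
  exact le_antisymm (le_ciInf fun w => (hπ x).2 w w.2)
    (ciInf_le ⟨0, Set.forall_mem_range.2 fun w : C => norm_nonneg (x - w)⟩ ⟨π x, (hπ x).1⟩)

theorem IsProjOn.eq_iff_mem_normalCone (hC : Convex ℝ C) (hπ : IsProjOn C π) {x v : H} :
    π x = v ↔ x - v ∈ normalCone C v := by
  constructor
  · rintro rfl
    exact ⟨(hπ x).1, fun z hz => hπ.inner_sub_le_zero hC x hz⟩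
  · rintro ⟨hv, hvi⟩
    have h₁ := hπ.inner_sub_le_zero hC x hv
    have h₂ := hvi (π x) (hπ x).1
    have hsq : ‖π x - v‖ ^ 2 = ⟪x - v, π x - v⟫ + ⟪x - π x, v - π x⟫ := by
      rw [← real_inner_self_eq_norm_sq, ← neg_sub (π x) v, inner_neg_right, ← sub_eq_add_neg,
        ← inner_sub_left, sub_sub_sub_cancel_left]
    have : ‖π x - v‖ ^ 2 = 0 := le_antisymm (by linarith) (sq_nonneg _)
    simpa [sub_eq_zero] using this

theorem IsProjOn.apply_add_of_mem_normalCone (hC : Convex ℝ C) (hπ : IsProjOn C π) {x y : H}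
    (hy : y ∈ normalCone C x) : π (x + y) = x :=
  (hπ.eq_iff_mem_normalCone hC).2 (by rwa [add_sub_cancel_left])

theorem IsProjOn.norm_sub_le (hC : Convex ℝ C) (hπ : IsProjOn C π) (x y : H) :
    ‖π x - π y‖ ≤ ‖x - y‖ := by
  have h₁ := hπ.inner_sub_le_zero hC x (hπ y).1
  have h₂ := hπ.inner_sub_le_zero hC y (hπ x).1
  have hsq : ‖π x - π y‖ ^ 2 ≤ ⟪x - y, π x - π y⟫ := by
    have : ⟪x - y, π x - π y⟫ - ‖π x - π y‖ ^ 2 =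
        -⟪x - π x, π y - π x⟫ - ⟪y - π y, π x - π y⟫ := by
      rw [← real_inner_self_eq_norm_sq]
      simp only [inner_sub_left, inner_sub_right, real_inner_comm]
      ring
    linarith
  have := hsq.trans (real_inner_le_norm _ _)
  nlinarith [norm_nonneg (π x - π y), norm_nonneg (x - y)]

theorem IsProjOn.norm_diffQuot_sub_le (hC : Convex ℝ C) (hπ : IsProjOn C π) (p h h' : H)
    {t : ℝ} (ht : 0 < t) :
    ‖t⁻¹ • (π (p + t • h) - π p) - t⁻¹ • (π (p + t • h') - π p)‖ ≤ ‖h - h'‖ := by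
  rw [← smul_sub, sub_sub_sub_cancel_right, norm_smul, norm_inv, Real.norm_of_nonneg ht.le,
    inv_mul_le_iff₀ ht]
  calc ‖π (p + t • h) - π (p + t • h')‖ ≤ ‖(p + t • h) - (p + t • h')‖ := hπ.norm_sub_le hC _ _
    _ = t * ‖h - h'‖ := by
      rw [add_sub_add_left_eq_sub, ← smul_sub, norm_smul, Real.norm_of_nonneg ht.le]

end Projection

section TangentCone

def radialCone (Ω : Set H) (z : H) : Set H :=
  {w | ∃ t : ℝ, 0 < t ∧ z + t • w ∈ Ω}

variable {Ω : Set H} {z : H}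

theorem _root_.Convex.add_smul_mem_of_le (hΩ : Convex ℝ Ω) (hz : z ∈ Ω) {w : H} {s t : ℝ}
    (ht : z + t • w ∈ Ω) (hs : 0 ≤ s) (hst : s ≤ t) : z + s • w ∈ Ω := by
  rcases hst.eq_or_lt' with rfl | hst
  · exact ht
  have ht₀ : 0 < t := hs.trans_lt hst
  have := hΩ.add_smul_mem hz ht ⟨div_nonneg hs ht₀.le, div_le_one_of_le₀ hst.le ht₀.le⟩
  rwa [smul_smul, div_mul_cancel₀ s ht₀.ne'] at this

theorem _root_.Convex.convex_radialCone (hΩ : Convex ℝ Ω) (hz : z ∈ Ω) :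
    Convex ℝ (radialCone Ω z) := by
  rintro u ⟨s, hs, hu⟩ v ⟨s', hs', hv⟩ a b ha hb hab
  refine ⟨min s s', lt_min hs hs', ?_⟩
  have hu' := hΩ.add_smul_mem_of_le hz hu (lt_min hs hs').le (min_le_left s s')
  have hv' := hΩ.add_smul_mem_of_le hz hv (lt_min hs hs').le (min_le_right s s')
  convert hΩ hu' hv' ha hb hab using 1
  obtain rfl : b = 1 - a := by linarith
  module

theorem _root_.Convex.tangentCone_eq_closure_radialCone (hΩ : Convex ℝ Ω) (hz : z ∈ Ω) :
    tangentCone Ω z = closure (radialCone Ω z) := by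
  refine Set.Subset.antisymm ?_ fun w hw => ?_
  · rintro w ⟨t, wk, hpos, -, hwk, hmem⟩
    exact mem_closure_of_tendsto hwk (Eventually.of_forall fun k => ⟨t k, hpos k, hmem k⟩)
  obtain ⟨u, hu, hlim⟩ := mem_closure_iff_seq_limit.1 hw
  choose s hs hmem using hu
  have hpos (k : ℕ) : 0 < min (s k) (1 / ((k : ℝ) + 1)) := lt_min (hs k) (by positivity)
  refine ⟨fun k => min (s k) (1 / ((k : ℝ) + 1)), u, hpos, ?_, hlim, fun k => ?_⟩
  · exact squeeze_zero (fun k => (hpos k).le) (fun k => min_le_right _ _)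
      tendsto_one_div_add_atTop_nhds_zero_nat
  · exact hΩ.add_smul_mem_of_le hz (hmem k) (hpos k).le (min_le_left _ _)

theorem _root_.Convex.convex_tangentCone (hΩ : Convex ℝ Ω) (hz : z ∈ Ω) :
    Convex ℝ (tangentCone Ω z) := by
  rw [hΩ.tangentCone_eq_closure_radialCone hz]
  exact (hΩ.convex_radialCone hz).closure

theorem _root_.Convex.isClosed_tangentCone (hΩ : Convex ℝ Ω) (hz : z ∈ Ω) :
    IsClosed (tangentCone Ω z) := by
  rw [hΩ.tangentCone_eq_closure_radialCone hz]
  exact isClosed_closure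

theorem zero_mem_tangentCone (hz : z ∈ Ω) : (0 : H) ∈ tangentCone Ω z :=
  ⟨fun k => 1 / ((k : ℝ) + 1), fun _ => 0, fun k => by positivity,
    tendsto_one_div_add_atTop_nhds_zero_nat, tendsto_const_nhds, fun k => by simpa using hz⟩

theorem _root_.Convex.convex_criticalCone (hΩ : Convex ℝ Ω) (hz : z ∈ Ω) (y : H) :
    Convex ℝ (tangentCone Ω z ∩ {u | ⟪y, u⟫ = 0}) :=
  (hΩ.convex_tangentCone hz).inter (convex_hyperplane (innerₛₗ ℝ y).isLinear 0)

theorem _root_.Convex.exists_isProjOn_criticalCone [ProperSpace H] (hΩ : Convex ℝ Ω)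
    (hz : z ∈ Ω) (y : H) : ∃ π : H → H, IsProjOn (tangentCone Ω z ∩ {u | ⟪y, u⟫ = 0}) π :=
  exists_isProjOn ((hΩ.isClosed_tangentCone hz).inter
    (isClosed_eq (continuous_const.inner continuous_id) continuous_const))
    ⟨0, zero_mem_tangentCone hz, inner_zero_right y⟩

end TangentCone

section GraphicalDerivative

variable {Ω : Set H} {π : H → H} {x y : H}

theorem mem_tangentCone_gphN_iff {v w : H} :
    mk2 v w ∈ tangentCone (gphN Ω) (mk2 x y) ↔
      ∃ t : ℕ → ℝ, ∃ vk wk : ℕ → H, (∀ k, 0 < t k) ∧ Tendsto t atTop (𝓝 0) ∧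
        Tendsto vk atTop (𝓝 v) ∧ Tendsto wk atTop (𝓝 w) ∧
        ∀ k, y + t k • wk k ∈ normalCone Ω (x + t k • vk k) := by
  constructor
  · rintro ⟨t, p, hpos, ht, hp, hmem⟩
    have hp' := ((WithLp.prod_continuous_ofLp 2 H H).tendsto _).comp hp
    exact ⟨t, fun k => (p k).ofLp.1, fun k => (p k).ofLp.2, hpos, ht,
      (continuous_fst.tendsto _).comp hp', (continuous_snd.tendsto _).comp hp', hmem⟩
  · rintro ⟨t, vk, wk, hpos, ht, hv, hw, hmem⟩
    exact ⟨t, fun k => mk2 (vk k) (wk k), hpos, ht,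
      ((WithLp.prod_continuous_toLp 2 H H).tendsto _).comp (hv.prodMk_nhds hw), hmem⟩

variable (hΩ : Convex ℝ Ω) (hπ : IsProjOn Ω π) (hy : y ∈ normalCone Ω x)
include hΩ hπ hy

theorem mk2_mem_tangentCone_gphN_of_tendsto {h L : H}
    (hL : Tendsto (fun t : ℝ => t⁻¹ • (π (x + y + t • h) - π (x + y))) (𝓝[>] 0) (𝓝 L)) :
    mk2 L (h - L) ∈ tangentCone (gphN Ω) (mk2 x y) := by
  rw [hπ.apply_add_of_mem_normalCone hΩ hy] at hL
  set t : ℕ → ℝ := fun k => 1 / ((k : ℝ) + 1)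
  have ht : Tendsto t atTop (𝓝 0) := tendsto_one_div_add_atTop_nhds_zero_nat
  have hpos : ∀ k, 0 < t k := fun k => by positivity
  set vk : ℕ → H := fun k => (t k)⁻¹ • (π (x + y + t k • h) - x)
  have hv : Tendsto vk atTop (𝓝 L) :=
    hL.comp (tendsto_nhdsWithin_iff.2 ⟨ht, Eventually.of_forall hpos⟩)
  refine mem_tangentCone_gphN_iff.2 ⟨t, vk, fun k => h - vk k, hpos, ht, hv,
    tendsto_const_nhds.sub hv, fun k => ?_⟩
  have hxk : x + t k • vk k = π (x + y + t k • h) := by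
    simp only [vk, smul_inv_smul₀ (hpos k).ne']
    abel
  have hyk : y + t k • (h - vk k) = (x + y + t k • h) - π (x + y + t k • h) := by
    rw [smul_sub, ← hxk]
    abel
  rw [hxk, hyk]
  exact (hπ.eq_iff_mem_normalCone hΩ).1 rfl

theorem eq_of_mk2_mem_tangentCone_gphN {v w L : H}
    (hL : Tendsto (fun t : ℝ => t⁻¹ • (π (x + y + t • (v + w)) - π (x + y))) (𝓝[>] 0) (𝓝 L))
    (hvw : mk2 v w ∈ tangentCone (gphN Ω) (mk2 x y)) : v = L := by
  obtain ⟨t, vk, wk, hpos, ht, hv, hw, hmem⟩ := mem_tangentCone_gphN_iff.1 hvw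
  have hvk (k : ℕ) : (t k)⁻¹ • (π (x + y + t k • (vk k + wk k)) - π (x + y)) = vk k := by
    have hsplit : x + y + t k • (vk k + wk k) = (x + t k • vk k) + (y + t k • wk k) := by
      rw [smul_add]
      abel
    rw [hsplit, hπ.apply_add_of_mem_normalCone hΩ (hmem k), hπ.apply_add_of_mem_normalCone hΩ hy,
      add_sub_cancel_left, inv_smul_smul₀ (hpos k).ne']
  refine tendsto_nhds_unique (hv.congr_dist ?_)
    (hL.comp (tendsto_nhdsWithin_iff.2 ⟨ht, Eventually.of_forall hpos⟩))
  refine squeeze_zero (fun k => dist_nonneg) (fun k => ?_)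
    (tendsto_iff_norm_sub_tendsto_zero.1 (hv.add hw))
  have := hπ.norm_diffQuot_sub_le hΩ (x + y) (vk k + wk k) (v + w) (hpos k)
  rwa [hvk k, ← dist_eq_norm] at this

theorem mk2_mem_tangentCone_gphN_iff_eq_of_tendsto {v w L : H}
    (hL : Tendsto (fun t : ℝ => t⁻¹ • (π (x + y + t • (v + w)) - π (x + y))) (𝓝[>] 0) (𝓝 L)) :
    mk2 v w ∈ tangentCone (gphN Ω) (mk2 x y) ↔ v = L := by
  refine ⟨eq_of_mk2_mem_tangentCone_gphN hΩ hπ hy hL, ?_⟩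
  rintro rfl
  simpa using mk2_mem_tangentCone_gphN_of_tendsto hΩ hπ hy hL

end GraphicalDerivative

end SOC

open SOC in
theorem pdc_iff_graphicalDerivative_eq_normalCone_of_criticalCone_general
    {n : ℕ} (Ω : Set (EuclideanSpace ℝ (Fin n)))
    (hconv : Convex ℝ Ω)
    (projΩ : EuclideanSpace ℝ (Fin n) → EuclideanSpace ℝ (Fin n))
    (hproj : IsProjOn Ω projΩ)
    (hdd : ∀ x h : EuclideanSpace ℝ (Fin n), ∃ L,
      Filter.Tendsto (fun t : ℝ => t⁻¹ • (projΩ (x + t • h) - projΩ x))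
        (nhdsWithin 0 (Set.Ioi 0)) (nhds L))
    (xb : EuclideanSpace ℝ (Fin n)) :
    (∀ y ∈ normalCone Ω xb, ∀ h : EuclideanSpace ℝ (Fin n),
      ∀ πK : EuclideanSpace ℝ (Fin n) → EuclideanSpace ℝ (Fin n),
        IsProjOn (tangentCone Ω xb ∩ {u | ⟪y, u⟫ = 0}) πK →
        Filter.Tendsto (fun t : ℝ => t⁻¹ • (projΩ (xb + y + t • h) - projΩ (xb + y)))
          (nhdsWithin 0 (Set.Ioi 0)) (nhds (πK h)))
    ↔
    (∀ yb ∈ normalCone Ω xb, ∀ v : EuclideanSpace ℝ (Fin n),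
      {w | mk2 v w ∈ tangentCone (gphN Ω) (mk2 xb yb)} =
        normalCone (tangentCone Ω xb ∩ {u | ⟪yb, u⟫ = 0}) v) := by
  constructor
  · intro hPDC yb hyb v
    obtain ⟨πK, hπK⟩ := hconv.exists_isProjOn_criticalCone hyb.1 yb
    ext w
    rw [Set.mem_ofPred_eq, mk2_mem_tangentCone_gphN_iff_eq_of_tendsto hconv hproj hyb
      (hPDC yb hyb (v + w) πK hπK), eq_comm,
      hπK.eq_iff_mem_normalCone (hconv.convex_criticalCone hyb.1 yb), add_sub_cancel_left]
  · intro hDN y hy h πK hπK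
    obtain ⟨L, hL⟩ := hdd (xb + y) h
    have hNK : h - L ∈ normalCone (tangentCone Ω xb ∩ {u | ⟪y, u⟫ = 0}) L := by
      rw [← hDN y hy L]
      exact mk2_mem_tangentCone_gphN_of_tendsto hconv hproj hy hL
    rwa [(hπK.eq_iff_mem_normalCone (hconv.convex_criticalCone hy.1 y)).2 hNK]

open SOC in
/-- Proposition 3.4: for a closed convex set `Ω` with everywhere directionally
differentiable projection, the projection derivation condition (PDC) holds at `x̄ ∈ Ω`
iff `DN_Ω(x̄,ȳ)(v) = N_{K(x̄,ȳ)}(v)` for all `ȳ ∈ N_Ω(x̄)` and all `v`. -/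
theorem pdc_iff_graphicalDerivative_eq_normalCone_of_criticalCone
    {n : ℕ} (Ω : Set (EuclideanSpace ℝ (Fin n)))
    (hne : Ω.Nonempty) (hcl : IsClosed Ω) (hconv : Convex ℝ Ω)
    (projΩ : EuclideanSpace ℝ (Fin n) → EuclideanSpace ℝ (Fin n))
    (hproj : IsProjOn Ω projΩ)
    (hdd : ∀ x h : EuclideanSpace ℝ (Fin n), ∃ L,
      Filter.Tendsto (fun t : ℝ => t⁻¹ • (projΩ (x + t • h) - projΩ x))
        (nhdsWithin 0 (Set.Ioi 0)) (nhds L))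
    (xb : EuclideanSpace ℝ (Fin n)) (hxb : xb ∈ Ω) :
    (∀ y ∈ normalCone Ω xb, ∀ h : EuclideanSpace ℝ (Fin n),
      ∀ πK : EuclideanSpace ℝ (Fin n) → EuclideanSpace ℝ (Fin n),
        IsProjOn (tangentCone Ω xb ∩ {u | ⟪y, u⟫ = 0}) πK →
        Filter.Tendsto (fun t : ℝ => t⁻¹ • (projΩ (xb + y + t • h) - projΩ (xb + y)))
          (nhdsWithin 0 (Set.Ioi 0)) (nhds (πK h)))
    ↔
    (∀ yb ∈ normalCone Ω xb, ∀ v : EuclideanSpace ℝ (Fin n),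
      {w | mk2 v w ∈ tangentCone (gphN Ω) (mk2 xb yb)} =
        normalCone (tangentCone Ω xb ∩ {u | ⟪yb, u⟫ = 0}) v) :=
  pdc_iff_graphicalDerivative_eq_normalCone_of_criticalCone_general Ω hconv projΩ hproj hdd xb
end
end

section
/- Let Φ : ℝ^n → ℝ^{m+1} be twice continuously differentiable, x̄ with Φ(x̄) = 0, x̄* ∈ ℝ^n, and λ̄ ∈ Λ(x̄,x̄*) := {λ ∈ −Q : ∇Φ(x̄)*λ = x̄*}. Then the following are equivalent: (i) Λ(x̄,x̄*) = {λ̄} and there exists ℓ > 0 such that dist(λ; Λ(x̄,x̄*)) ≤ ℓ·‖∇Φ(x̄)*λ − x̄*‖ for all λ ∈ −Q; (ii) (DN_Q)(0,λ̄)(0) ∩ ker ∇Φ(x̄)* = {0}, where DN_Q is the graphical derivative of the normal cone mapping to Q at (Φ(x̄),λ̄) = (0,λ̄). -/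
open scoped RealInnerProductSpace Pointwise
open Filter Topology Metric Set Classical

noncomputable section

namespace SOC

/-- Graph of the normal cone mapping `N_Q`. -/
def gphNQ (m : ℕ) : Set (WithLp 2 (Em m × Em m)) :=
  {p | p.ofLp.2 ∈ normalCone (Q m) p.ofLp.1}

end SOC

/-!
Since `Q` is self-dual, `N_Q(x) ⊆ −Q` for every `x`, with equality at `x = 0`, so the
graphical derivative `DN_Q(0,λ̄)(0)` is the tangent cone `T_{−Q}(λ̄)`. The theorem is therefore
an instance of a fact about a convex set `C`, a linear map `A` and `λ̄ ∈ C`: the error bound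
`‖λ − λ̄‖ ≤ ℓ ‖Aλ − Aλ̄‖` on `C` holds iff `T_C(λ̄) ∩ ker A = {0}`. Dividing the bound by `t_k`
passes it to tangent directions; conversely, normalizing a sequence that violates the bound
yields, by compactness of the unit sphere and convexity of `C`, a unit tangent direction in
`ker A`.
-/

namespace SOC

section TangentCone

variable {H F : Type*} [NormedAddCommGroup H] [InnerProductSpace ℝ H]
  [NormedAddCommGroup F] [NormedSpace ℝ F]

/-- For convex `C` the step sizes need not tend to `0`: shrinking them stays inside `C`. -/
theorem mem_tangentCone_of_convex {C : Set H} (hC : Convex ℝ C) {z w : H} (hz : z ∈ C)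
    {t : ℕ → ℝ} {wk : ℕ → H} (ht : ∀ k, 0 < t k) (hwk : Tendsto wk atTop (𝓝 w))
    (hmem : ∀ k, z + t k • wk k ∈ C) : w ∈ tangentCone C z := by
  set s : ℕ → ℝ := fun k => min (t k) (1 / ((k : ℝ) + 1))
  have hs : ∀ k, 0 < s k := fun k => lt_min (ht k) Nat.one_div_pos_of_nat
  refine ⟨s, wk, hs, ?_, hwk, fun k => ?_⟩
  · exact squeeze_zero (fun k => (hs k).le) (fun k => min_le_right _ _)
      tendsto_one_div_add_atTop_nhds_zero_nat
  · have hst : s k / t k ∈ Icc (0 : ℝ) 1 :=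
      ⟨(div_pos (hs k) (ht k)).le, (div_le_one (ht k)).2 (min_le_left _ _)⟩
    convert hC.add_smul_sub_mem hz (hmem k) hst using 2
    rw [add_sub_cancel_left, smul_smul, div_mul_cancel₀ _ (ht k).ne']

theorem sub_mem_tangentCone_of_convex {C : Set H} (hC : Convex ℝ C) {z y : H} (hz : z ∈ C)
    (hy : y ∈ C) : y - z ∈ tangentCone C z :=
  mem_tangentCone_of_convex hC hz (t := fun _ => 1) (fun _ => one_pos) tendsto_const_nhds
    fun _ => by simpa using hy

theorem norm_le_of_mem_tangentCone {C : Set H} {z w : H} (A : H →L[ℝ] F) {ℓ : ℝ}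
    (hℓ : ∀ y ∈ C, ‖y - z‖ ≤ ℓ * ‖A y - A z‖) (hw : w ∈ tangentCone C z) :
    ‖w‖ ≤ ℓ * ‖A w‖ := by
  obtain ⟨t, wk, ht, -, hwk, hmem⟩ := hw
  have hk : ∀ k, ‖wk k‖ ≤ ℓ * ‖A (wk k)‖ := fun k => by
    have := hℓ _ (hmem k)
    rw [map_add, add_sub_cancel_left, add_sub_cancel_left, map_smul, norm_smul, norm_smul,
      Real.norm_of_nonneg (ht k).le, mul_left_comm] at this
    exact le_of_mul_le_mul_left this (ht k)
  exact le_of_tendsto_of_tendsto' hwk.norm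
    (((A.continuous.tendsto w).comp hwk).norm.const_mul ℓ) hk

theorem exists_errorBound_of_tangentCone_inter_ker [ProperSpace H] {C : Set H}
    (hC : Convex ℝ C) {z : H} (hz : z ∈ C) (A : H →L[ℝ] F)
    (hker : ∀ w ∈ tangentCone C z, A w = 0 → w = 0) :
    ∃ ℓ > (0 : ℝ), ∀ y ∈ C, ‖y - z‖ ≤ ℓ * ‖A y - A z‖ := by
  by_contra! hbad
  choose y hyC hy using fun k : ℕ => hbad ((k : ℝ) + 1) (by positivity)
  set t : ℕ → ℝ := fun k => ‖y k - z‖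
  have ht : ∀ k, 0 < t k := fun k => (by positivity : (0 : ℝ) ≤ _).trans_lt (hy k)
  set w : ℕ → H := fun k => (t k)⁻¹ • (y k - z)
  have hw : ∀ k, w k ∈ sphere (0 : H) 1 := fun k => by
    simp [w, t, norm_smul, inv_mul_cancel₀ (ht k).ne']
  have hAw : Tendsto (fun k => A (w k)) atTop (𝓝 0) := by
    refine squeeze_zero_norm (fun k => ?_) tendsto_one_div_add_atTop_nhds_zero_nat
    rw [map_smul, map_sub, norm_smul, norm_inv, Real.norm_of_nonneg (ht k).le,
      inv_mul_le_iff₀ (ht k), mul_one_div, le_div_iff₀ (by positivity), mul_comm]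
    exact (hy k).le
  obtain ⟨w₀, hw₀, φ, hφ, hlim⟩ := (isCompact_sphere (0 : H) 1).tendsto_subseq hw
  have hmem : ∀ j, z + t (φ j) • w (φ j) ∈ C := fun j => by
    simpa [w, smul_smul, mul_inv_cancel₀ (ht (φ j)).ne'] using hyC (φ j)
  have hA₀ : A w₀ = 0 :=
    tendsto_nhds_unique ((A.continuous.tendsto w₀).comp hlim) (hAw.comp hφ.tendsto_atTop)
  have := hker w₀ (mem_tangentCone_of_convex hC hz (fun j => ht (φ j)) hlim hmem) hA₀
  simp [this] at hw₀

theorem errorBound_iff_tangentCone_inter_ker [ProperSpace H] {C : Set H} (hC : Convex ℝ C)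
    {z : H} (hz : z ∈ C) (A : H →L[ℝ] F) :
    ({y | y ∈ C ∧ A y = A z} = {z} ∧ ∃ ℓ > (0 : ℝ), ∀ y ∈ C,
        infDist y {y | y ∈ C ∧ A y = A z} ≤ ℓ * ‖A y - A z‖) ↔
      tangentCone C z ∩ {w | A w = 0} = {0} := by
  constructor
  · rintro ⟨hΛ, ℓ, -, hℓ⟩
    simp only [hΛ, infDist_singleton, dist_eq_norm] at hℓ
    refine eq_singleton_iff_unique_mem.2
      ⟨⟨by simpa using sub_mem_tangentCone_of_convex hC hz hz, map_zero A⟩, ?_⟩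
    rintro w ⟨hw, hAw : A w = 0⟩
    simpa [hAw] using norm_le_of_mem_tangentCone A hℓ hw
  · intro h
    have hker : ∀ w ∈ tangentCone C z, A w = 0 → w = 0 := fun w hw hAw => h.subset ⟨hw, hAw⟩
    have hΛ : {y | y ∈ C ∧ A y = A z} = {z} := by
      refine eq_singleton_iff_unique_mem.2 ⟨⟨hz, rfl⟩, fun y ⟨hy, hAy⟩ => ?_⟩
      exact sub_eq_zero.1 <| hker _ (sub_mem_tangentCone_of_convex hC hz hy)
        (by rw [map_sub, hAy, sub_self])
    refine ⟨hΛ, ?_⟩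
    simpa only [hΛ, infDist_singleton, dist_eq_norm] using
      exists_errorBound_of_tangentCone_inter_ker hC hz A hker

theorem normalCone_subset_polar {K : Set H} (hK : ∀ x ∈ K, ∀ q ∈ K, x + q ∈ K) (x : H) :
    normalCone K x ⊆ {y | ∀ q ∈ K, ⟪y, q⟫ ≤ 0} := fun y ⟨hx, hy⟩ q hq => by
  simpa using hy _ (hK x hx q hq)

theorem normalCone_zero {K : Set H} (hK : (0 : H) ∈ K) :
    normalCone K 0 = {y | ∀ q ∈ K, ⟪y, q⟫ ≤ 0} := by
  ext y
  simp [normalCone, hK]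

end TangentCone

section LorentzCone

variable {m : ℕ}

theorem inner_eq_fst_mul_fst_add_inner_snd (x y : Em m) :
    ⟪x, y⟫ = x.ofLp.1 * y.ofLp.1 + ⟪x.ofLp.2, y.ofLp.2⟫ := by
  rw [WithLp.prod_inner_apply, real_inner_eq_re_inner ℝ]
  simp [mul_comm]

theorem zero_mem_Q : (0 : Em m) ∈ Q m := by
  simp [Q]

theorem add_mem_Q_s9 {x y : Em m} (hx : x ∈ Q m) (hy : y ∈ Q m) : x + y ∈ Q m :=
  (norm_add_le _ _).trans (add_le_add hx hy)

theorem convex_Q : Convex ℝ (Q m) := by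
  intro x hx y hy a b ha hb _
  calc ‖(a • x + b • y).ofLp.2‖ ≤ a * ‖x.ofLp.2‖ + b * ‖y.ofLp.2‖ := by
        simpa [norm_smul, abs_of_nonneg ha, abs_of_nonneg hb] using
          norm_add_le (a • x.ofLp.2) (b • y.ofLp.2)
    _ ≤ a * x.ofLp.1 + b * y.ofLp.1 := by gcongr; exacts [hx, hy]
    _ = (a • x + b • y).ofLp.1 := by simp

theorem polar_Q : {y : Em m | ∀ q ∈ Q m, ⟪y, q⟫ ≤ 0} = -(Q m) := by
  ext y
  constructor
  · intro hy
    -- the test vector `(1, y_r / ‖y_r‖)` also covers `y_r = 0`, since then it is `(1, 0)`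
    have hq : mk2 (1 : ℝ) (‖y.ofLp.2‖⁻¹ • y.ofLp.2) ∈ Q m := by
      show ‖‖y.ofLp.2‖⁻¹ • y.ofLp.2‖ ≤ 1
      rw [norm_smul, norm_inv, norm_norm]
      exact inv_mul_le_one
    have := hy _ hq
    rw [inner_eq_fst_mul_fst_add_inner_snd] at this
    simp only [mk2, WithLp.equiv_symm_apply, real_inner_smul_right, real_inner_self_eq_norm_sq,
      sq, ← mul_assoc, inv_mul_mul_self, mul_one] at this
    show ‖(-y).ofLp.2‖ ≤ (-y).ofLp.1
    simp only [WithLp.ofLp_neg, Prod.fst_neg, Prod.snd_neg, norm_neg]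
    linarith
  · intro hy q hq
    have hy' : ‖y.ofLp.2‖ ≤ -y.ofLp.1 := by simpa [Q] using hy
    have hq' : ‖q.ofLp.2‖ ≤ q.ofLp.1 := hq
    rw [inner_eq_fst_mul_fst_add_inner_snd]
    nlinarith [real_inner_le_norm y.ofLp.2 q.ofLp.2, norm_nonneg y.ofLp.2,
      norm_nonneg q.ofLp.2]

theorem normalCone_Q_subset (x : Em m) : normalCone (Q m) x ⊆ -(Q m) :=
  polar_Q ▸ normalCone_subset_polar (fun _ hx _ hq => add_mem_Q_s9 hx hq) x

theorem normalCone_Q_zero : normalCone (Q m) 0 = -(Q m) :=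
  polar_Q ▸ normalCone_zero zero_mem_Q

theorem mk2_zero_add_smul (lam v : Em m) (t : ℝ) :
    mk2 (0 : Em m) lam + t • mk2 0 v = mk2 0 (lam + t • v) := by
  simp [mk2, ← WithLp.toLp_smul, ← WithLp.toLp_add]

theorem mk2_zero_mem_tangentCone_gphNQ_iff {lam w : Em m} :
    mk2 (0 : Em m) w ∈ tangentCone (gphNQ m) (mk2 0 lam) ↔ w ∈ tangentCone (-(Q m)) lam := by
  constructor
  · rintro ⟨t, u, ht, ht0, hu, hmem⟩
    exact ⟨t, fun k => (u k).ofLp.2, ht, ht0,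
      ((WithLp.continuous_snd 2 _ _).tendsto _).comp hu, fun k => normalCone_Q_subset _ (hmem k)⟩
  · rintro ⟨t, v, ht, ht0, hv, hmem⟩
    refine ⟨t, fun k => mk2 0 (v k), ht, ht0, ?_, fun k => ?_⟩
    · exact ((WithLp.prod_continuous_toLp 2 _ _).comp
        (continuous_const.prodMk continuous_id)).tendsto _ |>.comp hv
    · rw [mk2_zero_add_smul]
      show lam + t k • v k ∈ normalCone (Q m) 0
      exact normalCone_Q_zero ▸ hmem k

end LorentzCone

end SOC

open SOC in
theorem multiplier_uniqueness_and_error_bound_iff_dual_qualification_general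
    {n m : ℕ} (Φ : EuclideanSpace ℝ (Fin n) → Em m)
    (xb : EuclideanSpace ℝ (Fin n))
    (xs : EuclideanSpace ℝ (Fin n))
    (Λ : Set (Em m))
    (hΛ : Λ = {lam | lam ∈ -(Q m) ∧ ContinuousLinearMap.adjoint (fderiv ℝ Φ xb) lam = xs})
    (lamb : Em m) (hlamb : lamb ∈ Λ) :
    (Λ = {lamb} ∧ ∃ ℓ > (0 : ℝ), ∀ lam ∈ -(Q m),
        Metric.infDist lam Λ ≤ ℓ * ‖ContinuousLinearMap.adjoint (fderiv ℝ Φ xb) lam - xs‖)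
    ↔
    ({w : Em m | mk2 (0 : Em m) w ∈ tangentCone (gphNQ m) (mk2 (0 : Em m) lamb)} ∩
      {w : Em m | ContinuousLinearMap.adjoint (fderiv ℝ Φ xb) w = 0} = {0}) := by
  subst hΛ
  obtain ⟨hlambQ, rfl⟩ := hlamb
  have hD : {w : Em m | mk2 (0 : Em m) w ∈ tangentCone (gphNQ m) (mk2 (0 : Em m) lamb)} =
      tangentCone (-(Q m)) lamb :=
    Set.ext fun _ => mk2_zero_mem_tangentCone_gphNQ_iff
  rw [hD]
  exact errorBound_iff_tangentCone_inter_ker convex_Q.neg hlambQ _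

open SOC in
/-- Theorem 4.6, (i) ⟺ (ii): uniqueness of the Lagrange multiplier together with the
error bound estimate is equivalent to the dual qualification condition
`(DN_Q)(0,λ̄)(0) ∩ ker ∇Φ(x̄)* = {0}`. -/
theorem multiplier_uniqueness_and_error_bound_iff_dual_qualification
    {n m : ℕ} (Φ : EuclideanSpace ℝ (Fin n) → Em m) (hΦ : ContDiff ℝ 2 Φ)
    (xb : EuclideanSpace ℝ (Fin n)) (hxb : Φ xb = 0)
    (xs : EuclideanSpace ℝ (Fin n))
    (Λ : Set (Em m))
    (hΛ : Λ = {lam | lam ∈ -(Q m) ∧ ContinuousLinearMap.adjoint (fderiv ℝ Φ xb) lam = xs})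
    (lamb : Em m) (hlamb : lamb ∈ Λ) :
    (Λ = {lamb} ∧ ∃ ℓ > (0 : ℝ), ∀ lam ∈ -(Q m),
        Metric.infDist lam Λ ≤ ℓ * ‖ContinuousLinearMap.adjoint (fderiv ℝ Φ xb) lam - xs‖)
    ↔
    ({w : Em m | mk2 (0 : Em m) w ∈ tangentCone (gphNQ m) (mk2 (0 : Em m) lamb)} ∩
      {w : Em m | ContinuousLinearMap.adjoint (fderiv ℝ Φ xb) w = 0} = {0}) :=
  multiplier_uniqueness_and_error_bound_iff_dual_qualification_general Φ xb xs Λ hΛ lamb hlamb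
end
end

section
/- Let Φ : ℝ^n → ℝ^{m+1} be twice continuously differentiable, x̄ with Φ(x̄) = 0, and λ̄ ∈ bd(−Q)\{0} with ∇Φ(x̄)*λ̄ = x̄*. If the dual qualification condition (DN_Q)(0,λ̄)(0) ∩ ker ∇Φ(x̄)* = {0} holds, then ker ∇Φ(x̄)* = {0}, i.e., the derivative ∇Φ(x̄) : ℝ^n → ℝ^{m+1} has full rank m+1 (its adjoint is injective). -/
open scoped RealInnerProductSpace Pointwise
open Filter Topology Metric Set Classical

noncomputable section

private lemma soc_arith (c t u a W w0 : ℝ) (hc : 0 < c) (ht0 : 0 < t) (hu0 : 0 < u)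
    (h1 : t * |w0| ≤ c) (h2 : t * W ^ 2 ≤ c * u) (hg : a + c * w0 ≤ 0) :
    0 ≤ -(-c + t * (w0 - u)) ∧
      c ^ 2 + 2 * (t * a) + t ^ 2 * W ^ 2 ≤ (-(-c + t * (w0 - u))) ^ 2 := by
  constructor
  · nlinarith [mul_le_mul_of_nonneg_left (le_abs_self w0) ht0.le, mul_pos ht0 hu0]
  · nlinarith [mul_nonpos_of_nonneg_of_nonpos ht0.le hg,
      mul_le_mul_of_nonneg_left h2 ht0.le,
      mul_pos (mul_pos hc ht0) hu0,
      mul_nonneg (sq_nonneg t) (sq_nonneg (w0 - u))]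

set_option maxHeartbeats 1000000 in
open SOC in
/-- Theorem 4.6(ii), last part: if `λ̄ ∈ bd(−Q)\{0}` and the dual qualification
condition holds, then `ker ∇Φ(x̄)* = {0}`, i.e. `∇Φ(x̄)` has full rank `m+1`
(its adjoint is injective). -/
theorem dual_qualification_implies_full_rank_at_nonzero_boundary_multiplier
    {n m : ℕ} (Φ : EuclideanSpace ℝ (Fin n) → Em m) (hΦ : ContDiff ℝ 2 Φ)
    (xb : EuclideanSpace ℝ (Fin n)) (hxb : Φ xb = 0)
    (xs : EuclideanSpace ℝ (Fin n))
    (lamb : Em m) (hlam1 : lamb ∈ frontier (-(Q m))) (hlam2 : lamb ≠ 0)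
    (hlam3 : ContinuousLinearMap.adjoint (fderiv ℝ Φ xb) lamb = xs)
    (hdual : {w : Em m | mk2 (0 : Em m) w ∈ tangentCone (gphNQ m) (mk2 (0 : Em m) lamb)} ∩
      {w : Em m | ContinuousLinearMap.adjoint (fderiv ℝ Φ xb) w = 0} = {0}) :
    {w : Em m | ContinuousLinearMap.adjoint (fderiv ℝ Φ xb) w = 0} = {0} := by
  classical
  set T := ContinuousLinearMap.adjoint (fderiv ℝ Φ xb) with hTdef
  -- continuity of components
  have hc1 : Continuous fun s : Em m => s.ofLp.1 :=
    continuous_fst.comp (WithLp.prod_continuous_ofLp (p := 2) (α := ℝ) (β := EuclideanSpace ℝ (Fin m)))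
  have hc2 : Continuous fun s : Em m => s.ofLp.2 :=
    continuous_snd.comp (WithLp.prod_continuous_ofLp (p := 2) (α := ℝ) (β := EuclideanSpace ℝ (Fin m)))
  have hQclosed : IsClosed (Q m) := isClosed_le hc2.norm hc1
  have hmem : lamb ∈ -(Q m) := by
    have hcl : IsClosed (-(Q m)) := hQclosed.neg
    have := frontier_subset_closure hlam1
    rwa [hcl.closure_eq] at this
  have hle : ‖lamb.ofLp.2‖ ≤ -lamb.ofLp.1 := by
    rw [Set.mem_neg] at hmem
    have : ‖(-lamb).ofLp.2‖ ≤ (-lamb).ofLp.1 := hmem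
    simpa using this
  have hnotint : lamb ∉ interior (-(Q m)) := hlam1.2
  have hbd : ‖lamb.ofLp.2‖ = -lamb.ofLp.1 := by
    rcases lt_or_eq_of_le hle with h | h
    · exfalso
      apply hnotint
      have hopen : IsOpen {s : Em m | ‖s.ofLp.2‖ < -s.ofLp.1} :=
        isOpen_lt hc2.norm (hc1.neg)
      have hsub : {s : Em m | ‖s.ofLp.2‖ < -s.ofLp.1} ⊆ -(Q m) := by
        intro s hs
        rw [Set.mem_neg]
        show ‖(-s).ofLp.2‖ ≤ (-s).ofLp.1
        have h2 : (-s).ofLp.2 = -s.ofLp.2 := rfl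
        have h1 : (-s).ofLp.1 = -s.ofLp.1 := rfl
        rw [h1, h2, norm_neg]
        exact le_of_lt hs
      exact interior_maximal hsub hopen h
    · exact h
  set c : ℝ := ‖lamb.ofLp.2‖ with hcdef
  have hlr : lamb.ofLp.2 ≠ 0 := by
    intro h0
    apply hlam2
    have h1 : lamb.ofLp.1 = 0 := by
      have hz : c = 0 := by rw [hcdef, h0, norm_zero]
      rw [hz] at hbd; linarith
    exact WithLp.ofLp_injective 2 (Prod.ext h1 h0)
  have hc : 0 < c := norm_pos_iff.mpr hlr
  have hl1 : lamb.ofLp.1 = -c := by rw [hcdef]; linarith [hbd]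
  -- every element of -Q is in the normal cone to Q at 0
  have hNC : ∀ y : Em m, y ∈ -(Q m) → y ∈ normalCone (Q m) (0 : Em m) := by
    intro y hy
    rw [Set.mem_neg] at hy
    have hy' : ‖y.ofLp.2‖ ≤ -y.ofLp.1 := by
      have : ‖(-y).ofLp.2‖ ≤ (-y).ofLp.1 := hy
      simpa using this
    refine ⟨?_, ?_⟩
    · show ‖(0 : Em m).ofLp.2‖ ≤ (0 : Em m).ofLp.1
      simp [show (0 : Em m).ofLp.2 = 0 from rfl, show (0 : Em m).ofLp.1 = (0:ℝ) from rfl]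
    · intro z hz
      have hz' : ‖z.ofLp.2‖ ≤ z.ofLp.1 := hz
      rw [sub_zero, WithLp.prod_inner_apply]
      have h1 : ⟪y.ofLp.2, z.ofLp.2⟫ ≤ ‖y.ofLp.2‖ * ‖z.ofLp.2‖ := real_inner_le_norm _ _
      have h2 : (0:ℝ) ≤ z.ofLp.1 := le_trans (norm_nonneg _) hz'
      have h3 : ⟪y.ofLp.1, z.ofLp.1⟫ = y.ofLp.1 * z.ofLp.1 := by
        simp only [RCLike.inner_apply, conj_trivial]; ring
      rw [h3]
      nlinarith [norm_nonneg y.ofLp.2, norm_nonneg z.ofLp.2]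
  -- key: half-space directions are tangent
  have key : ∀ w : Em m, ⟪lamb.ofLp.2, w.ofLp.2⟫ + c * w.ofLp.1 ≤ 0 →
      mk2 (0 : Em m) w ∈ tangentCone (gphNQ m) (mk2 (0 : Em m) lamb) := by
    intro w hg
    set D : ℝ := ‖w.ofLp.2‖^2 + |w.ofLp.1| + 2 with hDdef
    have hD : 0 < D := by positivity
    set r : ℝ := min 1 (c / D) with hrdef
    have hr0 : 0 < r := lt_min one_pos (div_pos hc hD)
    have hr1 : r ≤ 1 := min_le_left _ _
    have hrD : r * D ≤ c := by
      have h1 : r ≤ c / D := min_le_right _ _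
      calc r * D ≤ (c / D) * D := mul_le_mul_of_nonneg_right h1 hD.le
        _ = c := div_mul_cancel₀ _ (ne_of_gt hD)
    set e : Em m := mk2 (-1 : ℝ) (0 : EuclideanSpace ℝ (Fin m)) with hedef
    refine ⟨fun k => r * ((k:ℝ)+1)⁻¹,
      fun k => mk2 (0:Em m) (w + ((k:ℝ)+1)⁻¹ • e), ?_, ?_, ?_, ?_⟩
    · intro k
      have : (0:ℝ) < ((k:ℝ)+1)⁻¹ := by positivity
      exact mul_pos hr0 this
    · have h1 : Filter.Tendsto (fun k : ℕ => ((k:ℝ)+1)⁻¹) atTop (𝓝 0) := by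
        simpa [one_div] using tendsto_one_div_add_atTop_nhds_zero_nat (𝕜 := ℝ)
      have := h1.const_mul r
      simpa using this
    · have hcont : Continuous (fun x : Em m => mk2 (0 : Em m) x) := by
        exact (WithLp.prod_continuous_toLp (p := 2) (α := Em m) (β := Em m)).comp
          (continuous_const.prodMk continuous_id)
      have h1 : Filter.Tendsto (fun k : ℕ => ((k:ℝ)+1)⁻¹) atTop (𝓝 0) := by
        simpa [one_div] using tendsto_one_div_add_atTop_nhds_zero_nat (𝕜 := ℝ)
      have h2 : Filter.Tendsto (fun k : ℕ => w + ((k:ℝ)+1)⁻¹ • e) atTop (𝓝 w) := by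
        have h3 : Filter.Tendsto (fun k : ℕ => ((k:ℝ)+1)⁻¹ • e) atTop (𝓝 ((0:ℝ) • e)) :=
          h1.smul_const e
        rw [zero_smul] at h3
        simpa using (tendsto_const_nhds.add h3 :
          Filter.Tendsto (fun k : ℕ => w + ((k:ℝ)+1)⁻¹ • e) atTop (𝓝 (w + 0)))
      exact (hcont.tendsto w).comp h2
    · intro k
      set u : ℝ := ((k:ℝ)+1)⁻¹ with hudef
      set t : ℝ := r * u with htdef
      have hu0 : 0 < u := by rw [hudef]; positivity
      have hu1 : u ≤ 1 := by
        rw [hudef]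
        rw [inv_le_one_iff₀]
        right; push_cast; linarith [Nat.cast_nonneg (α := ℝ) k]
      have ht0 : 0 < t := mul_pos hr0 hu0
      set wk : Em m := w + u • e with hwkdef
      -- goal reduces to membership of the pair
      show (mk2 (0:Em m) lamb + t • mk2 (0:Em m) wk).ofLp.2 ∈
        normalCone (Q m) ((mk2 (0:Em m) lamb + t • mk2 (0:Em m) wk).ofLp.1)
      have hfst : (mk2 (0:Em m) lamb + t • mk2 (0:Em m) wk).ofLp.1 = (0 : Em m) := by
        show (0:Em m) + t • (0:Em m) = 0
        simp
      have hsnd : (mk2 (0:Em m) lamb + t • mk2 (0:Em m) wk).ofLp.2 = lamb + t • wk := rfl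
      rw [hfst, hsnd]
      apply hNC
      rw [Set.mem_neg]
      show ‖(-(lamb + t • wk)).ofLp.2‖ ≤ (-(lamb + t • wk)).ofLp.1
      have hsnd2 : (-(lamb + t • wk)).ofLp.2 = -(lamb.ofLp.2 + t • wk.ofLp.2) := rfl
      have hfst2 : (-(lamb + t • wk)).ofLp.1 = -(lamb.ofLp.1 + t * wk.ofLp.1) := rfl
      rw [hsnd2, hfst2, norm_neg]
      have hwk2 : wk.ofLp.2 = w.ofLp.2 := by
        show w.ofLp.2 + u • (0 : EuclideanSpace ℝ (Fin m)) = w.ofLp.2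
        simp
      have hwk1 : wk.ofLp.1 = w.ofLp.1 - u := by
        show w.ofLp.1 + u * (-1) = w.ofLp.1 - u
        ring
      rw [hwk2, hwk1, hl1]
      -- now pure analysis
      have h5 : t ≤ r := by
        rw [htdef]
        calc r * u ≤ r * 1 := mul_le_mul_of_nonneg_left hu1 hr0.le
          _ = r := mul_one r
      have h6 : |w.ofLp.1| ≤ D := by
        rw [hDdef]; have := sq_nonneg ‖w.ofLp.2‖; linarith
      have h7 : t * |w.ofLp.1| ≤ c :=
        le_trans (le_trans (mul_le_mul_of_nonneg_right h5 (abs_nonneg _))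
          (mul_le_mul_of_nonneg_left h6 hr0.le)) hrD
      have hA : ‖w.ofLp.2‖ ^ 2 ≤ D := by
        rw [hDdef]; have := abs_nonneg w.ofLp.1; linarith
      have hB : r * ‖w.ofLp.2‖ ^ 2 ≤ c :=
        le_trans (mul_le_mul_of_nonneg_left hA hr0.le) hrD
      have h8 : t * ‖w.ofLp.2‖ ^ 2 ≤ c * u := by
        rw [htdef]
        calc r * u * ‖w.ofLp.2‖ ^ 2 = (r * ‖w.ofLp.2‖ ^ 2) * u := by ring
          _ ≤ c * u := mul_le_mul_of_nonneg_right hB hu0.le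
      obtain ⟨hRHS, hsq'⟩ := soc_arith c t u ⟪lamb.ofLp.2, w.ofLp.2⟫ ‖w.ofLp.2‖ w.ofLp.1 hc ht0 hu0 h7 h8 hg
      have hexp : ‖lamb.ofLp.2 + t • w.ofLp.2‖ ^ 2
          = c ^ 2 + 2 * (t * ⟪lamb.ofLp.2, w.ofLp.2⟫) + t ^ 2 * ‖w.ofLp.2‖ ^ 2 := by
        rw [norm_add_sq_real, real_inner_smul_right, norm_smul,
          Real.norm_eq_abs, abs_of_pos ht0, mul_pow]
      have hsq : ‖lamb.ofLp.2 + t • w.ofLp.2‖ ^ 2 ≤ (-(-c + t * (w.ofLp.1 - u))) ^ 2 := by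
        rw [hexp]; exact hsq'
      exact le_of_pow_le_pow_left₀ (by norm_num) hRHS hsq
  -- main argument
  have main : ∀ w : Em m, T w = 0 → w = 0 := by
    intro w hw
    rcases le_or_gt (⟪lamb.ofLp.2, w.ofLp.2⟫ + c * w.ofLp.1) 0 with h | h
    · have hmem : w ∈ ({w : Em m | mk2 (0 : Em m) w ∈ tangentCone (gphNQ m) (mk2 (0 : Em m) lamb)} ∩
        {w : Em m | ContinuousLinearMap.adjoint (fderiv ℝ Φ xb) w = 0}) := ⟨key w h, hw⟩
      rw [hdual] at hmem
      exact hmem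
    · have h2 : (-w).ofLp.2 = -w.ofLp.2 := rfl
      have h1 : (-w).ofLp.1 = -w.ofLp.1 := rfl
      have h' : ⟪lamb.ofLp.2, (-w).ofLp.2⟫ + c * (-w).ofLp.1 ≤ 0 := by
        rw [h2, h1, inner_neg_right]
        linarith
      have hw' : T (-w) = 0 := by rw [map_neg, hw, neg_zero]
      have hmem : -w ∈ ({w : Em m | mk2 (0 : Em m) w ∈ tangentCone (gphNQ m) (mk2 (0 : Em m) lamb)} ∩
        {w : Em m | ContinuousLinearMap.adjoint (fderiv ℝ Φ xb) w = 0}) := ⟨key (-w) h', hw'⟩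
      rw [hdual] at hmem
      exact neg_eq_zero.mp hmem
  ext w
  simp only [Set.mem_setOf_eq, Set.mem_singleton_iff]
  constructor
  · exact main w
  · rintro rfl
    exact map_zero T
end
end

section
/- Let Φ = (Φ₀,Φ_r) : ℝ^n → ℝ × ℝ^m be continuous at x̄, and suppose Φ(x̄) ∈ bd(Q)\{0}, i.e., ‖Φ_r(x̄)‖ = Φ₀(x̄) > 0. Define ψ : ℝ^{m+1} → ℝ² by ψ(s₀,s_r) = (‖s_r‖² − s₀², −s₀). Then with c := (√2·Φ₀(x̄))⁻¹ there exists a neighborhood U of x̄ such that dist(Φ(x); Q) ≤ c·dist(ψ(Φ(x)); ℝ²₋) for all x ∈ U, where ℝ²₋ = (−∞,0]². -/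
open scoped RealInnerProductSpace Pointwise
open Filter Topology Metric Set Classical

noncomputable section

namespace SOC

/-- The reduction mapping `ψ(s₀,s_r) = (‖s_r‖² − s₀², −s₀)`, with values in `ℝ²`
equipped with the Euclidean norm. -/
def psi {m : ℕ} (s : Em m) : WithLp 2 (ℝ × ℝ) :=
  mk2 (‖s.ofLp.2‖ ^ 2 - s.ofLp.1 ^ 2) (-s.ofLp.1)

/-- The nonpositive orthant `ℝ²₋ = (−∞,0]²`. -/
def R2minus : Set (WithLp 2 (ℝ × ℝ)) := {p | p.ofLp.1 ≤ 0 ∧ p.ofLp.2 ≤ 0}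

end SOC

/-!
Outside `Q`, the nearest point of `Q` to `s = (s₀, s_r)` is obtained by replacing both `s₀` and
`‖s_r‖` by their mean, which lies at distance `(‖s_r‖ - s₀)/√2`. The first coordinate of `ψ(s)` is
`‖s_r‖² - s₀² = (‖s_r‖ - s₀)(‖s_r‖ + s₀)` and bounds `dist(ψ(s); ℝ²₋)` from below, so the estimate
holds whenever `‖s_r‖ + s₀ ≥ Φ₀(x̄)`. Outside `Q` this follows from `s₀ ≥ Φ₀(x̄)/2`, which holds
near `x̄` by continuity.
-/

namespace SOC

variable {m : ℕ}

theorem infDist_Q_le_of_lt (s : Em m) (hlt : s.ofLp.1 < ‖s.ofLp.2‖)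
    (hsum : 0 ≤ s.ofLp.1 + ‖s.ofLp.2‖) :
    infDist s (Q m) ≤ (‖s.ofLp.2‖ - s.ofLp.1) / √2 := by
  set s₀ := s.ofLp.1
  set r := ‖s.ofLp.2‖
  have hr : 0 < r := by linarith
  -- the metric projection of `s` onto `Q`
  set a := (s₀ + r) / 2 with ha_def
  have ha : 0 ≤ a := div_nonneg hsum zero_le_two
  set p : Em m := mk2 a ((a / r) • s.ofLp.2)
  have hpQ : p ∈ Q m := by
    change ‖(a / r) • s.ofLp.2‖ ≤ a
    rw [norm_smul, Real.norm_of_nonneg (div_nonneg ha hr.le), div_mul_cancel₀ _ hr.ne']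
  have hsnd : dist s.ofLp.2 p.ofLp.2 = r - a := by
    change ‖s.ofLp.2 - (a / r) • s.ofLp.2‖ = r - a
    rw [← one_smul ℝ s.ofLp.2, smul_smul, mul_one, ← sub_smul, norm_smul,
      Real.norm_of_nonneg, sub_mul, div_mul_cancel₀ _ hr.ne', one_mul]
    rw [sub_nonneg, div_le_one hr]; linarith
  have hdist : dist s p = (r - s₀) / √2 := by
    rw [WithLp.prod_dist_eq_of_L2, WithLp.fst, WithLp.fst, WithLp.snd, WithLp.snd, hsnd,
      Real.dist_eq, sq_abs, ← Real.sqrt_sq (by positivity : 0 ≤ (r - s₀) / √2)]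
    congr 1
    rw [div_pow, Real.sq_sqrt zero_le_two]
    change (s₀ - a) ^ 2 + (r - a) ^ 2 = _
    ring
  exact hdist ▸ infDist_le_dist_of_mem hpQ

theorem fst_le_infDist_R2minus (p : WithLp 2 (ℝ × ℝ)) : p.ofLp.1 ≤ infDist p R2minus := by
  refine (le_infDist (s := R2minus) ⟨0, le_rfl, le_rfl⟩).2 fun y hy => ?_
  calc p.ofLp.1 ≤ p.ofLp.1 - y.ofLp.1 := by linarith [hy.1]
    _ ≤ dist p.fst y.fst := (le_abs_self _).trans_eq (Real.dist_eq _ _).symm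
    _ ≤ dist p y := WithLp.dist_fst_le p y

theorem infDist_Q_le_infDist_psi (s : Em m) {t : ℝ} (ht : 0 < t) (hs : t ≤ 2 * s.ofLp.1) :
    infDist s (Q m) ≤ (√2 * t)⁻¹ * infDist (psi s) R2minus := by
  by_cases hQ : s ∈ Q m
  · rw [infDist_zero_of_mem hQ]
    exact mul_nonneg (by positivity) infDist_nonneg
  set s₀ := s.ofLp.1
  set r := ‖s.ofLp.2‖
  have hlt : s₀ < r := not_le.1 hQ
  calc infDist s (Q m) ≤ (r - s₀) / √2 := infDist_Q_le_of_lt s hlt (by linarith)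
    _ = (√2 * t)⁻¹ * ((r - s₀) * t) := by field_simp
    _ ≤ (√2 * t)⁻¹ * (r ^ 2 - s₀ ^ 2) := by gcongr; nlinarith
    _ ≤ (√2 * t)⁻¹ * infDist (psi s) R2minus := by gcongr; exact fst_le_infDist_R2minus (psi s)

end SOC

open SOC in
theorem dist_to_Q_le_dist_psi_near_nonzero_boundary_general
    {n m : ℕ} (Φ : EuclideanSpace ℝ (Fin n) → Em m)
    (xb : EuclideanSpace ℝ (Fin n)) (hc : ContinuousAt Φ xb)
    (hpos : 0 < (Φ xb).ofLp.1) :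
    ∃ U ∈ nhds xb, ∀ x ∈ U,
      Metric.infDist (Φ x) (Q m) ≤
        (Real.sqrt 2 * (Φ xb).ofLp.1)⁻¹ * Metric.infDist (psi (Φ x)) R2minus := by
  have hfst : ContinuousAt (fun x => (Φ x).ofLp.1) xb :=
    (WithLp.continuous_fst 2 ℝ _).continuousAt.comp hc
  refine ⟨_, hfst.eventually (eventually_gt_nhds (half_lt_self hpos)), fun x hx => ?_⟩
  exact infDist_Q_le_infDist_psi (Φ x) hpos (by linarith [hx.out])

open SOC in
/-- Estimate (4.16): near a point where `Φ(x̄) ∈ bd(Q)\{0}`, the distance to `Q` is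
bounded by `c = (√2·Φ₀(x̄))⁻¹` times the distance of `ψ(Φ(x))` to `ℝ²₋`. -/
theorem dist_to_Q_le_dist_psi_near_nonzero_boundary
    {n m : ℕ} (Φ : EuclideanSpace ℝ (Fin n) → Em m)
    (xb : EuclideanSpace ℝ (Fin n)) (hc : ContinuousAt Φ xb)
    (hbd : ‖(Φ xb).ofLp.2‖ = (Φ xb).ofLp.1) (hpos : 0 < (Φ xb).ofLp.1) :
    ∃ U ∈ nhds xb, ∀ x ∈ U,
      Metric.infDist (Φ x) (Q m) ≤
        (Real.sqrt 2 * (Φ xb).ofLp.1)⁻¹ * Metric.infDist (psi (Φ x)) R2minus :=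
  dist_to_Q_le_dist_psi_near_nonzero_boundary_general Φ xb hc hpos
end
end
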